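/- arXiv:1612.09249 — 9 statements merged into one kernel-verified Lean document; each statement's English description precedes it below -/
import Mathlib

section
/- Let n ≥ 2 and m = n^n + (−1)^{n+1}, let F_q be a finite field whose characteristic p does not divide m, and let ψ ∈ F_q with ψ^{n+1} ≠ 1. Then the generalized Klein–Mukai hypersurface F_ψ = 0 is smooth: the only common zero in an algebraic closure of F_q of the n+1 partial derivatives ∂F_ψ/∂x_0, …, ∂F_ψ/∂x_n is the origin (0,…,0). -/
/-!
Write `y_a = x_a` for `a : Fin n` (indices taken cyclically), `z = x_n` and `P = ∏ y_a`.
Multiplying `∂F/∂x_a = 0` by `y_a` shows that the monomials `u_a = y_a^n y_(a+1)` satisfy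
`u_(a-1) + n u_a = (n+1) ψ P z`, so `w_a = (n+1) u_a - (n+1) ψ P z` satisfies `w_a = -n w_(a+1)`.
Since `(-n)^n - 1 = (-1)^n m ≠ 0`, every `w_a` vanishes, i.e. `u_a = ψ P z`. Taking the product
over `a` and using `z^n = ψ P` (from `∂F/∂x_n = 0`) gives `(1 - ψ^(n+1)) P^(n+1) = 0`, hence
`P = 0` and `z = 0`. Then `∂F/∂x_a = 0` shows that `y_a = 0` forces `y_(a-1) = 0`, and some
`y_a` vanishes because `P = 0`.
-/

open MvPolynomial
open scoped BigOperators

noncomputable section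

/-- The generalized Klein–Mukai pencil
`F_ψ = x_0^n x_1 + x_1^n x_2 + ⋯ + x_(n-1)^n x_0 + x_n^(n+1) - (n+1) ψ x_0 x_1 ⋯ x_n`. -/
def FKM (n : ℕ) (R : Type*) [CommRing R] (ψ : R) : MvPolynomial (Fin (n+1)) R :=
  (∑ i : Fin n, (X (Fin.castSucc i) : MvPolynomial (Fin (n+1)) R) ^ n
      * X (Fin.castSucc (finRotate n i)))
    + X (Fin.last n) ^ (n + 1)
    - MvPolynomial.C ((n + 1 : R) * ψ) * ∏ j : Fin (n+1), X j

open Finset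

theorem pderiv_prod_X {σ R : Type*} [DecidableEq σ] [CommSemiring R] (k : σ) (s : Finset σ) :
    pderiv k (∏ j ∈ s, (X j : MvPolynomial σ R)) =
      if k ∈ s then ∏ j ∈ s.erase k, X j else 0 := by
  induction s using Finset.induction_on with
  | empty => simp
  | insert a s ha ih =>
    rw [prod_insert ha, pderiv_mul, ih]
    obtain rfl | hk := eq_or_ne k a
    · simp [ha]
    · by_cases hks : k ∈ s
      · simp [hks, hk, erase_insert_of_ne hk.symm,
          prod_insert fun h => ha (mem_of_mem_erase h)]
      · simp [hks, hk]

theorem Finset.prod_univ_erase_eq_prod_update {ι M : Type*} [Fintype ι] [DecidableEq ι]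
    [CommMonoid M] (f : ι → M) (k : ι) :
    ∏ j ∈ univ.erase k, f j = ∏ j, Function.update f k 1 j := by
  rw [prod_update_of_mem (mem_univ k), one_mul, sdiff_singleton_eq_erase]

theorem Fin.prod_univ_erase_last {M : Type*} [CommMonoid M] {n : ℕ} (x : Fin (n + 1) → M) :
    ∏ j ∈ univ.erase (last n), x j = ∏ b : Fin n, x b.castSucc := by
  rw [Finset.prod_univ_erase_eq_prod_update, prod_univ_castSucc]
  simp [castSucc_ne_last]

theorem Fin.prod_univ_erase_castSucc {M : Type*} [CommMonoid M] {n : ℕ} (x : Fin (n + 1) → M)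
    (a : Fin n) :
    ∏ j ∈ univ.erase a.castSucc, x j =
      (∏ b ∈ univ.erase a, x b.castSucc) * x (last n) := by
  rw [Finset.prod_univ_erase_eq_prod_update, Finset.prod_univ_erase_eq_prod_update,
    prod_univ_castSucc]
  simp [Function.update_apply, (castSucc_lt_last a).ne']

open Fin.NatCast in
theorem Fin.forall_of_imp_sub_one {n : ℕ} [NeZero n] {p : Fin n → Prop} {a₀ : Fin n}
    (h₀ : p a₀) (h : ∀ a, p a → p (a - 1)) (a : Fin n) : p a := by
  have hdown : ∀ j : ℕ, p (a₀ - j) := by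
    intro j
    induction j with
    | zero => simpa using h₀
    | succ j ih => simpa [sub_add_eq_sub_sub] using h _ ih
  simpa using hdown (a₀ - a).val

theorem Fin.eq_zero_of_forall_eq_mul_add_one {R : Type*} [CommRing R] [IsDomain R]
    {n : ℕ} [NeZero n] {t : R} (ht : t ^ n ≠ 1) {w : Fin n → R}
    (hw : ∀ a, w a = t * w (a + 1)) : w = 0 := by
  have hprod : ∏ a, w a = t ^ n * ∏ a, w a :=
    calc ∏ a, w a = ∏ a, t * w (a + 1) := prod_congr rfl fun a _ => hw a
      _ = t ^ n * ∏ a, w a := by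
        rw [prod_mul_distrib, prod_const,
          Fintype.prod_equiv (Equiv.addRight 1) (fun a => w (a + 1)) w fun _ => rfl]
  have hzero : ∏ a, w a = 0 := by
    have : (1 - t ^ n) * ∏ a, w a = 0 := by linear_combination hprod
    exact (mul_eq_zero.mp this).resolve_left (sub_ne_zero.mpr ht.symm)
  obtain ⟨a₀, -, ha₀⟩ := prod_eq_zero_iff.mp hzero
  funext a
  exact Fin.forall_of_imp_sub_one (p := (w · = 0)) ha₀
    (fun a ha => by rw [hw, sub_add_cancel, ha, mul_zero]) a

theorem natCast_add_one_ne_zero_of_neg_pow_ne_one {R : Type*} [Ring R] {n : ℕ}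
    (h : (-(n : R)) ^ n ≠ 1) : (n : R) + 1 ≠ 0 := by
  intro hn
  rw [neg_eq_of_add_eq_zero_left (add_comm 1 (n : R) ▸ hn), one_pow] at h
  exact h rfl

theorem neg_natCast_pow_ne_one {R : Type*} [CommRing R] {n m : ℕ}
    (hm : (m : ℤ) = n ^ n + (-1) ^ (n + 1)) (hmR : (m : R) ≠ 0) : (-(n : R)) ^ n ≠ 1 := by
  intro h
  rw [neg_pow] at h
  have hsq : ((-1 : R) ^ n) ^ 2 = 1 := by rw [← pow_mul, mul_comm, pow_mul, neg_one_sq, one_pow]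
  apply hmR
  rw [show (m : R) = n ^ n + (-1) ^ (n + 1) by exact_mod_cast congrArg (Int.cast (R := R)) hm]
  linear_combination (-1 : R) ^ n * h - (n : R) ^ n * hsq

section Derivatives

variable {K : Type*} [CommRing K]

theorem eval_pderiv_FKM_last (n : ℕ) (ψ : K) (x : Fin (n + 1) → K) :
    eval x (pderiv (Fin.last n) (FKM n K ψ)) =
      (n + 1) * x (Fin.last n) ^ n - (n + 1) * ψ * ∏ b : Fin n, x b.castSucc := by
  classical
  simp [FKM, pderiv_prod_X, Fin.prod_univ_erase_last]

theorem eval_pderiv_FKM_castSucc {n : ℕ} [NeZero n] (ψ : K) (x : Fin (n + 1) → K) (a : Fin n) :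
    eval x (pderiv a.castSucc (FKM n K ψ)) =
      x (a - 1).castSucc ^ n + n * x a.castSucc ^ (n - 1) * x (a + 1).castSucc
        - (n + 1) * ψ * ((∏ b ∈ univ.erase a, x b.castSucc) * x (Fin.last n)) := by
  classical
  have hpred : ∀ i : Fin n, i + 1 = a ↔ i = a - 1 := fun i => eq_sub_iff_add_eq.symm
  simp [FKM, Pi.single_apply, sum_add_distrib, pderiv_prod_X, Fin.prod_univ_erase_castSucc, hpred,
    mul_comm]

end Derivatives

section CriticalPoint

variable {R : Type*} [CommRing R] [IsDomain R] {n : ℕ} [NeZero n] {ψ z : R} {y : Fin n → R}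

theorem klein_mukai_monomial_eq (hM : (-(n : R)) ^ n ≠ 1)
    (hy : ∀ a, y (a - 1) ^ n + n * y a ^ (n - 1) * y (a + 1) =
      (n + 1) * ψ * ((∏ b ∈ univ.erase a, y b) * z)) (a : Fin n) :
    y a ^ n * y (a + 1) = ψ * ((∏ b, y b) * z) := by
  set u : Fin n → R := fun a => y a ^ n * y (a + 1)
  set c : R := (n + 1) * ψ * ((∏ b, y b) * z)
  have hu : ∀ a, u (a - 1) + n * u a = c := by
    intro a
    have hP : y a * ∏ b ∈ univ.erase a, y b = ∏ b, y b := mul_prod_erase _ _ (mem_univ a)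
    have hpow : y a * y a ^ (n - 1) = y a ^ n := mul_pow_sub_one (NeZero.ne n) _
    simp only [u, c, sub_add_cancel]
    linear_combination y a * hy a + (n + 1) * ψ * z * hP - n * y (a + 1) * hpow
  have hw := Fin.eq_zero_of_forall_eq_mul_add_one hM (w := fun a => (n + 1) * u a - c) fun a => by
    have h := hu (a + 1)
    rw [add_sub_cancel_right] at h
    linear_combination (n + 1 : R) * h
  have hwa : (n + 1) * u a - c = 0 := congrFun hw a
  refine mul_left_cancel₀ (natCast_add_one_ne_zero_of_neg_pow_ne_one hM) ?_
  linear_combination hwa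

theorem klein_mukai_prod_eq_zero (hM : (-(n : R)) ^ n ≠ 1) (hψ : ψ ^ (n + 1) ≠ 1)
    (hy : ∀ a, y (a - 1) ^ n + n * y a ^ (n - 1) * y (a + 1) =
      (n + 1) * ψ * ((∏ b ∈ univ.erase a, y b) * z))
    (hz : z ^ n = ψ * ∏ b, y b) :
    ∏ b, y b = 0 := by
  set P := ∏ b, y b
  have hprod : P ^ n * P = (ψ * (P * z)) ^ n :=
    calc P ^ n * P = ∏ a, y a ^ n * y (a + 1) := by
          rw [prod_mul_distrib, prod_pow,
            Fintype.prod_equiv (Equiv.addRight 1) (fun a => y (a + 1)) y fun _ => rfl]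
      _ = (ψ * (P * z)) ^ n := by
          rw [prod_congr rfl fun a _ => klein_mukai_monomial_eq hM hy a, Fin.prod_const]
  have hP : (1 - ψ ^ (n + 1)) * P ^ (n + 1) = 0 := by
    linear_combination hprod + ψ ^ n * P ^ n * hz
  exact pow_eq_zero_iff (Nat.succ_ne_zero n) |>.mp <|
    (mul_eq_zero.mp hP).resolve_left (sub_ne_zero.mpr hψ.symm)

theorem klein_mukai_critical_eq_zero (hn : 2 ≤ n) (hM : (-(n : R)) ^ n ≠ 1)
    (hψ : ψ ^ (n + 1) ≠ 1)
    (hy : ∀ a, y (a - 1) ^ n + n * y a ^ (n - 1) * y (a + 1) =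
      (n + 1) * ψ * ((∏ b ∈ univ.erase a, y b) * z))
    (hz : (n + 1) * z ^ n = (n + 1) * ψ * ∏ b, y b) :
    y = 0 ∧ z = 0 := by
  have hz' : z ^ n = ψ * ∏ b, y b :=
    mul_left_cancel₀ (natCast_add_one_ne_zero_of_neg_pow_ne_one hM) (by linear_combination hz)
  have hP := klein_mukai_prod_eq_zero hM hψ hy hz'
  have hz0 : z = 0 := pow_eq_zero_iff (NeZero.ne n) |>.mp (by rw [hz', hP, mul_zero])
  obtain ⟨a₀, -, ha₀⟩ := prod_eq_zero_iff.mp hP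
  refine ⟨funext fun a => Fin.forall_of_imp_sub_one (p := (y · = 0)) ha₀ (fun a ha => ?_) a,
    hz0⟩
  have h := hy a
  rw [ha, hz0, zero_pow (by omega : n - 1 ≠ 0)] at h
  exact pow_eq_zero_iff (NeZero.ne n) |>.mp (by linear_combination h)

end CriticalPoint

theorem klein_mukai_smooth_general (n m : ℕ) (hn : 2 ≤ n)
    (hm : (m : ℤ) = (n : ℤ) ^ n + (-1) ^ (n + 1))
    (F : Type) [Field F] (hchar : ¬ (ringChar F ∣ m))
    (ψ : F) (hψ : ψ ^ (n + 1) ≠ 1) :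
    ∀ x : Fin (n+1) → AlgebraicClosure F,
      (∀ i, MvPolynomial.eval x
        (MvPolynomial.pderiv i
          (FKM n (AlgebraicClosure F) (algebraMap F (AlgebraicClosure F) ψ))) = 0) →
      x = 0 := by
  intro x hx
  have : NeZero n := ⟨by omega⟩
  have hmK : (m : AlgebraicClosure F) ≠ 0 := by
    rwa [Ne, ringChar.spec, ← Algebra.ringChar_eq F]
  have hψK : (algebraMap F (AlgebraicClosure F) ψ) ^ (n + 1) ≠ 1 := by
    rwa [← map_pow, Ne, map_eq_one_iff _ (algebraMap F _).injective]
  obtain ⟨hy, hz⟩ := klein_mukai_critical_eq_zero (y := fun b => x b.castSucc)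
    (z := x (Fin.last n)) hn (neg_natCast_pow_ne_one hm hmK) hψK
    (fun a => sub_eq_zero.mp ((eval_pderiv_FKM_castSucc _ x a).symm.trans (hx _)))
    (sub_eq_zero.mp ((eval_pderiv_FKM_last n _ x).symm.trans (hx _)))
  exact funext (Fin.lastCases hz (congrFun hy))

/-- if `char F_q ∤ m = n^n + (-1)^(n+1)` and `ψ^(n+1) ≠ 1`, then the
generalized Klein–Mukai hypersurface `F_ψ = 0` is smooth: the only common zero of the
partial derivatives in an algebraic closure is the origin. -/
theorem klein_mukai_smooth (n m : ℕ) (hn : 2 ≤ n)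
    (hm : (m : ℤ) = (n : ℤ) ^ n + (-1) ^ (n + 1))
    (F : Type) [Field F] [Fintype F] (hchar : ¬ (ringChar F ∣ m))
    (ψ : F) (hψ : ψ ^ (n + 1) ≠ 1) :
    ∀ x : Fin (n+1) → AlgebraicClosure F,
      (∀ i, MvPolynomial.eval x
        (MvPolynomial.pderiv i
          (FKM n (AlgebraicClosure F) (algebraMap F (AlgebraicClosure F) ψ))) = 0) →
      x = 0 :=
  klein_mukai_smooth_general n m hn hm F hchar ψ hψ

end
end

section
/- Let n ≥ 2 and m = n^n + (−1)^{n+1}, and let K be an algebraically closed field whose characteristic does not divide m. Let L(x_0,…,x_{n−1}) = x_0^n x_1 + x_1^n x_2 + ⋯ + x_{n−2}^n x_{n−1} + x_{n−1}^n x_0 be the loop polynomial of length n. Then L has no critical point with all coordinates nonzero: there is no x ∈ K^n with every x_i ≠ 0 such that ∂L/∂x_i(x) = 0 for all i = 0,…,n−1. -/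
open MvPolynomial
open scoped BigOperators

noncomputable section

/-- The loop polynomial of length `n`:
`L = x_0^n x_1 + x_1^n x_2 + ⋯ + x_(n-2)^n x_(n-1) + x_(n-1)^n x_0`. -/
def loopPoly (n : ℕ) (K : Type*) [CommRing K] : MvPolynomial (Fin n) K :=
  ∑ i : Fin n, (X i : MvPolynomial (Fin n) K) ^ n * X (finRotate n i)

/-!
Write the loop polynomial as `∑ᵢ xᵢ^k x_{σ i}` with `σ` the cyclic shift and `k = n`. At a
critical point with nonzero coordinates, `xᵢ ∂ᵢ = 0` reads `k xᵢ^k x_{σ i} = -x_{σ⁻¹ i}^k xᵢ`.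
Multiplying these over all `i`, both sides become `∏ xᵢ^k · ∏ xᵢ` (since `σ` only permutes the
factors) times `k^n`, resp. `(-1)^n`; cancelling gives `n^n = (-1)^n`, i.e. `m = 0` in `K`.
-/
section PermPowSum

variable {ι R : Type*} [Fintype ι] [CommRing R] (σ : Equiv.Perm ι) (k : ℕ)

theorem pderiv_sum_X_pow_mul_X_perm (i : ι) :
    pderiv i (∑ j, X j ^ k * X (σ j) : MvPolynomial ι R) =
      (k : MvPolynomial ι R) * X i ^ (k - 1) * X (σ i) + X (σ.symm i) ^ k := by
  classical
  simp [pderiv_X, Pi.single_apply, ← Equiv.eq_symm_apply, Finset.sum_add_distrib,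
    Finset.sum_ite_eq', mul_comm, add_comm]

theorem natCast_pow_card_eq_neg_one_pow_card_of_isCritical [IsDomain R] {x : ι → R}
    (hx : ∀ i, x i ≠ 0)
    (hc : ∀ i, eval x (pderiv i (∑ j, X j ^ k * X (σ j) : MvPolynomial ι R)) = 0) :
    (k : R) ^ Fintype.card ι = (-1) ^ Fintype.card ι := by
  have hcrit (i : ι) : k * x i ^ k * x (σ i) = -x (σ.symm i) ^ k * x i := by
    have h := congrArg (x i * ·) (hc i)
    simp only [pderiv_sum_X_pow_mul_X_perm, map_add, map_mul, map_pow, map_natCast, eval_X,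
      mul_zero] at h
    rcases k with _ | k
    · simpa using h
    · rw [Nat.add_sub_cancel] at h
      linear_combination h
  have hprod : (∏ i, x i ^ k) * ∏ i, x i ≠ 0 :=
    mul_ne_zero (Finset.prod_ne_zero_iff.2 fun i _ => pow_ne_zero _ (hx i))
      (Finset.prod_ne_zero_iff.2 fun i _ => hx i)
  refine mul_right_cancel₀ hprod ?_
  calc (k : R) ^ Fintype.card ι * ((∏ i, x i ^ k) * ∏ i, x i)
      = ∏ i, (k * x i ^ k * x (σ i)) := by
        rw [Finset.prod_mul_distrib, Finset.prod_mul_distrib, Finset.prod_const,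
          Finset.card_univ, Equiv.prod_comp σ x, mul_assoc]
    _ = ∏ i, (-x (σ.symm i) ^ k * x i) := Finset.prod_congr rfl fun i _ => hcrit i
    _ = (-1) ^ Fintype.card ι * ((∏ i, x i ^ k) * ∏ i, x i) := by
        simp_rw [neg_eq_neg_one_mul (x _ ^ k)]
        rw [Finset.prod_mul_distrib, Finset.prod_mul_distrib, Finset.prod_const,
          Finset.card_univ, Equiv.prod_comp σ.symm (x · ^ k), mul_assoc]

end PermPowSum

theorem loop_no_toric_critical_point_general (n m : ℕ)
    (hm : (m : ℤ) = (n : ℤ) ^ n + (-1) ^ (n + 1))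
    (K : Type) [Field K] (hchar : ¬ (ringChar K ∣ m)) :
    ¬ ∃ x : Fin n → K, (∀ i, x i ≠ 0) ∧
      (∀ i, MvPolynomial.eval x (MvPolynomial.pderiv i (loopPoly n K)) = 0) := by
  rintro ⟨x, hx, hc⟩
  have hpow : (n : K) ^ n = (-1) ^ n := by
    simpa using natCast_pow_card_eq_neg_one_pow_card_of_isCritical (finRotate n) n hx hc
  refine hchar ((CharP.cast_eq_zero_iff K (ringChar K) m).mp ?_)
  rw [← Int.cast_natCast, hm]
  push_cast
  rw [pow_succ, hpow]
  ring

/-- over an algebraically closed field whose characteristic does not divide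
`m = n^n + (-1)^(n+1)`, the loop polynomial of length `n` has no critical point with all
coordinates nonzero. -/
theorem loop_no_toric_critical_point (n m : ℕ) (hn : 2 ≤ n)
    (hm : (m : ℤ) = (n : ℤ) ^ n + (-1) ^ (n + 1))
    (K : Type) [Field K] [IsAlgClosed K] (hchar : ¬ (ringChar K ∣ m)) :
    ¬ ∃ x : Fin n → K, (∀ i, x i ≠ 0) ∧
      (∀ i, MvPolynomial.eval x (MvPolynomial.pderiv i (loopPoly n K)) = 0) :=
  loop_no_toric_critical_point_general n m hm K hchar

end
end

section
/- Let n ≥ 2, let F_q be a finite field, let Θ : F_q → ℂ^× be a nontrivial additive character, and let ψ ∈ F_q. Then the exponential sums for wF_ψ over G_m × A^{n+1} and over G_m^{n+1} × A^1 agree: Σ_{w ∈ F_q^×} Σ_{(x_0,…,x_n) ∈ F_q^{n+1}} Θ(w·F_ψ(x_0,…,x_n)) = Σ_{w ∈ F_q^×} Σ_{(x_0,…,x_{n−1}) ∈ (F_q^×)^n} Σ_{x_n ∈ F_q} Θ(w·F_ψ(x_0,…,x_n)). -/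
open MvPolynomial
open scoped BigOperators

noncomputable section

/-!
Split the points `(v, t) ∈ F^n × F` according to the set `Z` of vanishing coordinates of `v`;
`Z = ∅` gives exactly the toric points. If `i ∈ Z`, the monomial term dies and
`F_ψ(v, t) = C(v) + t^(n+1)` with `C(v) = ∑ v_j^n v_(j+1)`. Breaking the cycle at `i`, the
coordinates of `v` can be rescaled by units so that `C` gets multiplied by any given `U ∈ Fˣ`,
and such a rescaling preserves `Z`. So `∑_v Θ(w C(v))` over the fibre of `Z` does not depend on
`w`, and the fibre contributes this constant times `∑_w ∑_t Θ(w t^(n+1)) = 0`.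
-/

namespace KleinMukai

open Finset

lemma sum_pi_fin_succ_eq_sum_sum_snoc {α M : Type*} [Fintype α] [AddCommMonoid M] {n : ℕ}
    (f : (Fin (n + 1) → α) → M) : ∑ x, f x = ∑ v : Fin n → α, ∑ t, f (Fin.snoc v t) :=
  (Fintype.sum_equiv (Fin.snocEquiv fun _ => α) _ f fun _ => rfl).symm.trans
    (Fintype.sum_prod_type_right _)

section ZeroSet

variable {ι F M : Type*} [Fintype ι] [Field F] [DecidableEq F] [AddCommMonoid M]

def zeroSet (v : ι → F) : Finset ι := {j | v j = 0}

lemma zeroSet_smul (s : ι → Fˣ) (v : ι → F) : zeroSet (s • v) = zeroSet v := by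
  ext j
  simp [zeroSet, Units.smul_def]

@[simp]
lemma mem_zeroSet {v : ι → F} {j : ι} : j ∈ zeroSet v ↔ v j = 0 := by
  simp [zeroSet]

lemma zeroSet_eq_empty_iff {v : ι → F} : zeroSet v = ∅ ↔ ∀ j, v j ≠ 0 := by
  simp [zeroSet, Finset.eq_empty_iff_forall_notMem]

variable [DecidableEq ι] [Fintype F]

lemma sum_zeroSet_eq_empty (H : (ι → F) → M) :
    ∑ v with zeroSet v = ∅, H v = ∑ y : ι → Fˣ, H (fun j => y j) := by
  have hinj : Function.Injective fun (y : ι → Fˣ) j => (y j : F) :=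
    fun y y' h => funext fun j => Units.ext (congrFun h j)
  rw [← sum_image hinj.injOn]
  congr 1
  ext v
  simp only [mem_filter, mem_univ, true_and, zeroSet_eq_empty_iff, mem_image]
  refine ⟨fun hv => ⟨fun j => Units.mk0 (v j) (hv j), funext fun j => rfl⟩, ?_⟩
  rintro ⟨y, rfl⟩ j
  exact (y j).ne_zero

lemma sum_eq_sum_units_of_sum_zeroSet_eq_zero (H : (ι → F) → M)
    (hH : ∀ Z : Finset ι, Z.Nonempty → ∑ v with zeroSet v = Z, H v = 0) :
    ∑ v, H v = ∑ y : ι → Fˣ, H (fun j => y j) := by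
  rw [← sum_zeroSet_eq_empty, ← sum_fiberwise univ zeroSet H]
  exact sum_eq_single ∅ (fun Z _ hZ => hH Z (nonempty_iff_ne_empty.2 hZ)) (by simp)

end ZeroSet

section CharacterSum

variable {F R : Type*} [Field F] [Fintype F] [DecidableEq F] [CommRing R] [IsDomain R]
  {Θ : AddChar F R}

lemma sum_units_add_apply_zero {M : Type*} [AddCommMonoid M] (f : F → M) :
    ∑ w : Fˣ, f w + f 0 = ∑ x, f x := by
  rw [← sum_erase_add univ f (mem_univ 0), sum_subtype (univ.erase 0) (p := (· ≠ 0)) (by simp)]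
  exact congrArg (· + f 0) (Fintype.sum_equiv unitsEquivNeZero _ _ fun _ => rfl)

lemma sum_units_addChar_mul (hΘ : Θ ≠ 1) (a : F) :
    ∑ w : Fˣ, Θ (w * a) = (if a = 0 then (Fintype.card F : R) else 0) - 1 := by
  have h := AddChar.sum_mulShift a (AddChar.IsPrimitive.of_ne_one hΘ)
  rw [← sum_units_add_apply_zero, zero_mul, AddChar.map_zero_eq_one] at h
  rw [eq_sub_iff_add_eq, h]
  split_ifs <;> simp

lemma sum_units_sum_addChar_mul_pow (hΘ : Θ ≠ 1) {k : ℕ} (hk : k ≠ 0) :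
    ∑ w : Fˣ, ∑ t : F, Θ (w * t ^ k) = 0 := by
  rw [sum_comm]
  simp_rw [sum_units_addChar_mul hΘ, pow_eq_zero_iff hk]
  simp [sum_sub_distrib]

end CharacterSum

section CyclicForm

variable {F : Type*} [Field F] {n : ℕ}

def cyclicForm (v : Fin n → F) : F := ∑ j, v j ^ n * v (finRotate n j)

lemma eval_snoc_FKM (ψ : F) (v : Fin n → F) (t : F) :
    eval (Fin.snoc v t) (FKM n F ψ) =
      cyclicForm v + t ^ (n + 1) - (n + 1) * ψ * ((∏ j, v j) * t) := by
  simp [FKM, cyclicForm, Fin.prod_univ_castSucc, mul_assoc]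

lemma eval_snoc_FKM_of_apply_eq_zero (ψ : F) {v : Fin n → F} {i : Fin n} (hi : v i = 0)
    (t : F) : eval (Fin.snoc v t) (FKM n F ψ) = cyclicForm v + t ^ (n + 1) := by
  rw [eval_snoc_FKM, prod_eq_zero (mem_univ i) hi, zero_mul, mul_zero, sub_zero]

-- Since `n * e k + e (k + 1) = 1`, scaling the coordinate `k + 1` steps after a vanishing one
-- by `U ^ e k` multiplies every term of `cyclicForm` that avoids the vanishing one by `U`.
def cyclicExponent (n : ℕ) : ℕ → ℤ
  | 0 => 0
  | k + 1 => 1 - n * cyclicExponent n k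

lemma zpow_cyclicExponent_pow_mul (U : Fˣ) (k : ℕ) :
    (U ^ cyclicExponent n k) ^ n * U ^ cyclicExponent n (k + 1) = U := by
  rw [← zpow_natCast, ← zpow_mul, ← zpow_add, cyclicExponent]
  conv_rhs => rw [← zpow_one U]
  congr 1
  ring

lemma exists_cyclicForm_smul_eq_mul (U : Fˣ) (i : Fin n) :
    ∃ s : Fin n → Fˣ, ∀ v : Fin n → F, v i = 0 → cyclicForm (s • v) = U * cyclicForm v := by
  obtain ⟨m, rfl⟩ : ∃ m, n = m + 1 := ⟨n - 1, by have := i.pos; omega⟩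
  refine ⟨fun j => U ^ cyclicExponent (m + 1) (j - i - 1).val, fun v hv => ?_⟩
  simp only [cyclicForm, finRotate_apply, mul_sum, Pi.smul_apply', Units.smul_def]
  refine sum_congr rfl fun j _ => ?_
  by_cases hj : j = i
  · simp [hj, hv]
  by_cases hj' : j + 1 = i
  · simp [hj', hv]
  have hval : (j + 1 - i - 1).val = (j - i - 1).val + 1 := by
    have hlast : j - i - 1 ≠ Fin.last m := fun h => hj <| by
      rw [← sub_eq_zero, ← sub_add_cancel (j - i) 1, h, Fin.last_add_one]
    rw [show j + 1 - i - 1 = j - i - 1 + 1 by abel, Fin.val_add_one, if_neg hlast]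
  have hU := congrArg Units.val (zpow_cyclicExponent_pow_mul (n := m + 1) U (j - i - 1).val)
  rw [Units.val_mul, Units.val_pow_eq_pow_val] at hU
  rw [hval, ← hU]
  ring

variable [Fintype F] [DecidableEq F]

lemma sum_zeroSet_fiber_comp_mul_cyclicForm {M : Type*} [AddCommMonoid M] (f : F → M)
    {Z : Finset (Fin n)} {i : Fin n} (hi : i ∈ Z) (U : Fˣ) :
    ∑ v with zeroSet v = Z, f (U * cyclicForm v) = ∑ v with zeroSet v = Z, f (cyclicForm v) := by
  obtain ⟨s, hs⟩ := exists_cyclicForm_smul_eq_mul U i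
  refine sum_equiv (MulAction.toPerm s) (fun v => by simp [zeroSet_smul]) fun v hv => ?_
  rw [mem_filter] at hv
  rw [MulAction.toPerm_apply, hs v (mem_zeroSet.1 (hv.2 ▸ hi))]

lemma sum_zeroSet_fiber_sum_units_sum_addChar_FKM {R : Type*} [CommRing R] [IsDomain R]
    {Θ : AddChar F R} (hΘ : Θ ≠ 1) (ψ : F) {Z : Finset (Fin n)} (hZ : Z.Nonempty) :
    ∑ v with zeroSet v = Z, ∑ w : Fˣ, ∑ t, Θ (w * eval (Fin.snoc v t) (FKM n F ψ)) = 0 := by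
  obtain ⟨i, hi⟩ := hZ
  have hsplit : ∀ v ∈ ({v | zeroSet v = Z} : Finset (Fin n → F)),
      ∑ w : Fˣ, ∑ t, Θ (w * eval (Fin.snoc v t) (FKM n F ψ)) =
        ∑ w : Fˣ, Θ (w * cyclicForm v) * ∑ t, Θ (w * t ^ (n + 1)) := by
    intro v hv
    rw [mem_filter] at hv
    simp_rw [eval_snoc_FKM_of_apply_eq_zero ψ (mem_zeroSet.1 (hv.2 ▸ hi)), mul_add,
      AddChar.map_add_eq_mul, mul_sum]
  calc _ = ∑ w : Fˣ, (∑ v with zeroSet v = Z, Θ (w * cyclicForm v)) *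
        ∑ t, Θ (w * t ^ (n + 1)) := by
        rw [sum_congr rfl hsplit, sum_comm]
        simp_rw [sum_mul]
    _ = (∑ v with zeroSet v = Z, Θ (cyclicForm v)) * ∑ w : Fˣ, ∑ t, Θ (w * t ^ (n + 1)) := by
        rw [mul_sum]
        exact sum_congr rfl fun w _ => by rw [sum_zeroSet_fiber_comp_mul_cyclicForm Θ hi w]
    _ = 0 := by rw [sum_units_sum_addChar_mul_pow hΘ n.succ_ne_zero, mul_zero]

end CyclicForm

end KleinMukai

open KleinMukai Finset

theorem klein_mukai_exponential_sum_toric_general (n : ℕ)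
    (F : Type) [Field F] [Fintype F] [DecidableEq F]
    (Θ : AddChar F ℂ) (hΘ : ∃ a : F, Θ a ≠ 1) (ψ : F) :
    ∑ w : Fˣ, ∑ x : Fin (n+1) → F, Θ ((w : F) * MvPolynomial.eval x (FKM n F ψ))
      = ∑ w : Fˣ, ∑ y : Fin n → Fˣ, ∑ t : F,
          Θ ((w : F) *
            MvPolynomial.eval (Fin.snoc (fun i => (y i : F)) t) (FKM n F ψ)) := by
  simp_rw [sum_pi_fin_succ_eq_sum_sum_snoc]
  rw [sum_comm, sum_eq_sum_units_of_sum_zeroSet_eq_zero, sum_comm]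
  exact fun Z hZ =>
    sum_zeroSet_fiber_sum_units_sum_addChar_FKM (AddChar.ne_one_iff.2 hΘ) ψ hZ

/-- the exponential sums of `w·F_ψ` over `𝔾_m × 𝔸^(n+1)` and over
`𝔾_m^(n+1) × 𝔸^1` agree (the first `n` affine variables may be replaced by toric
ones). -/
theorem klein_mukai_exponential_sum_toric (n : ℕ) (hn : 2 ≤ n)
    (F : Type) [Field F] [Fintype F] [DecidableEq F]
    (Θ : AddChar F ℂ) (hΘ : ∃ a : F, Θ a ≠ 1) (ψ : F) :
    ∑ w : Fˣ, ∑ x : Fin (n+1) → F, Θ ((w : F) * MvPolynomial.eval x (FKM n F ψ))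
      = ∑ w : Fˣ, ∑ y : Fin n → Fˣ, ∑ t : F,
          Θ ((w : F) *
            MvPolynomial.eval (Fin.snoc (fun i => (y i : F)) t) (FKM n F ψ)) :=
  klein_mukai_exponential_sum_toric_general n F Θ hΘ ψ

end
end

section
/- Let n ≥ 2, let F_q be a finite field, let Θ : F_q → ℂ^× be a nontrivial additive character, and let ψ ∈ F_q. Then for every nonempty subset J ⊆ {0,1,…,n−1}, the exponential sum over points whose coordinates indexed by J vanish is zero: Σ_{w ∈ F_q^×} Σ_{(x_0,…,x_n) ∈ F_q^{n+1}, x_i = 0 for all i ∈ J} Θ(w·F_ψ(x_0,…,x_n)) = 0. -/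
/-!
Fix `w ≠ 0`. If `v ∉ J` but `v + 1 ∈ J` (indices mod `n`), then on the slice `x_{v+1} = 0` the
pencil is affine in `x_v` with slope `x_{v-1}^n`, so summing `Θ (w F)` over `x_v` multiplies the
sum by `q` and imposes `x_{v-1} = 0`. Repeating this, the slice shrinks to
`x_0 = ⋯ = x_{n-1} = 0`, where `F = x_n^(n+1)`. Finally `∑_{w ≠ 0} Θ (w a)` is `q - 1` for
`a = 0` and `-1` otherwise, so `∑_{w ≠ 0} ∑_t Θ (w t^(n+1)) = (q - 1) - (q - 1) = 0`.
-/

open MvPolynomial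
open scoped BigOperators

noncomputable section

open Finset Function

section ZeroSlice

variable {ι : Type*} [Fintype ι] [DecidableEq ι]

def zeroSlice (R : Type*) [Zero R] [Fintype R] [DecidableEq R] (J : Finset ι) :
    Finset (ι → R) :=
  univ.filter fun x => ∀ i ∈ J, x i = 0

variable {R M : Type*} [Zero R] [Fintype R] [DecidableEq R] [AddCommMonoid M]

@[simp]
lemma mem_zeroSlice {J : Finset ι} {x : ι → R} :
    x ∈ zeroSlice R J ↔ ∀ i ∈ J, x i = 0 := by
  simp [zeroSlice]

lemma zeroSlice_insert (u : ι) (J : Finset ι) :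
    zeroSlice R (insert u J) = (zeroSlice R J).filter fun x => x u = 0 := by
  ext x
  simp [and_comm]

lemma zeroSlice_univ : zeroSlice R (univ : Finset ι) = {0} := by
  ext x
  simp [funext_iff]

lemma sum_zeroSlice_eq_sum_sum_update {u : ι} {J : Finset ι} (hu : u ∉ J)
    (f : (ι → R) → M) :
    ∑ x ∈ zeroSlice R J, f x = ∑ x ∈ zeroSlice R (insert u J), ∑ t, f (update x u t) := by
  rw [← sum_product']
  refine sum_nbij' (fun x => (update x u 0, x u)) (fun p => update p.1 u p.2) ?_ ?_ ?_ ?_ ?_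
  · intro x hx
    simp only [mem_zeroSlice, mem_product, mem_univ, and_true] at hx ⊢
    intro i hi
    rcases mem_insert.1 hi with rfl | hi
    · simp
    · rw [update_of_ne (ne_of_mem_of_not_mem hi hu), hx i hi]
  · intro p hp
    simp only [mem_zeroSlice, mem_product, mem_univ, and_true] at hp ⊢
    intro i hi
    rw [update_of_ne (ne_of_mem_of_not_mem hi hu), hp i (mem_insert_of_mem hi)]
  · intro x _
    simp
  · intro p hp
    simp only [mem_zeroSlice, mem_product, mem_univ, and_true] at hp
    simp [← hp u (mem_insert_self u J)]
  · intro x _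
    simp

end ZeroSlice

section Character

variable {F : Type*} [Field F] [Fintype F] [DecidableEq F] {Θ : AddChar F ℂ}

lemma sum_units_eq_sum_sub_apply_zero {M : Type*} [AddCommGroup M] (f : F → M) :
    ∑ w : Fˣ, f w = ∑ w, f w - f 0 := by
  rw [eq_sub_iff_add_eq, ← sum_erase_add univ f (mem_univ 0)]
  congr 1
  refine sum_bij (fun w _ => (w : F)) (by simp) (fun _ _ _ _ h => Units.val_injective h) ?_
    (by simp)
  intro b hb
  exact ⟨Units.mk0 b (ne_of_mem_erase hb), by simp, rfl⟩

lemma AddChar.sum_units_apply_mul (hΘ : Θ ≠ 1) (a : F) :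
    ∑ w : Fˣ, Θ (w * a) = (if a = 0 then (Fintype.card F : ℂ) else 0) - 1 := by
  rw [sum_units_eq_sum_sub_apply_zero (fun w => Θ (w * a)),
    AddChar.sum_mulShift a (AddChar.IsPrimitive.of_ne_one hΘ), zero_mul,
    AddChar.map_zero_eq_one, Nat.cast_ite, Nat.cast_zero]

lemma AddChar.sum_units_sum_apply_mul_pow (hΘ : Θ ≠ 1) {m : ℕ} (hm : m ≠ 0) :
    ∑ w : Fˣ, ∑ t, Θ (w * t ^ m) = 0 := by
  rw [sum_comm]
  simp [AddChar.sum_units_apply_mul hΘ, pow_eq_zero_iff hm, sum_sub_distrib]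

variable {ι : Type*} [Fintype ι] [DecidableEq ι]

lemma AddChar.sum_zeroSlice_eq_card_mul_of_affine (hΘ : Θ ≠ 1) {u : ι} {J : Finset ι}
    (hu : u ∉ J) (f a : (ι → F) → F)
    (haff : ∀ x ∈ zeroSlice F J, x u = 0 → ∀ t, f (update x u t) = a x * t + f x) :
    ∑ x ∈ zeroSlice F J, Θ (f x) = Fintype.card F *
      ∑ x ∈ (zeroSlice F (insert u J)).filter (fun x => a x = 0), Θ (f x) := by
  rw [sum_zeroSlice_eq_sum_sum_update hu, sum_filter, mul_sum]
  refine sum_congr rfl fun x hx => ?_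
  rw [zeroSlice_insert, mem_filter] at hx
  simp_rw [haff x hx.1 hx.2, AddChar.map_add_eq_mul, ← sum_mul, mul_comm (a x),
    AddChar.sum_mulShift _ (AddChar.IsPrimitive.of_ne_one hΘ)]
  split_ifs <;> simp

end Character

section KleinMukai

variable {n : ℕ} {R : Type*} [CommRing R] (ψ : R)

lemma eval_FKM (x : Fin (n + 1) → R) :
    eval x (FKM n R ψ) = ∑ i : Fin n, x i.castSucc ^ n * x (finRotate n i).castSucc
      + x (Fin.last n) ^ (n + 1) - (n + 1) * ψ * ∏ j, x j := by
  simp [FKM]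

lemma eval_FKM_of_apply_eq_zero {x : Fin (n + 1) → R} {j : Fin (n + 1)} (hj : x j = 0) :
    eval x (FKM n R ψ) = ∑ i : Fin n, x i.castSucc ^ n * x (finRotate n i).castSucc
      + x (Fin.last n) ^ (n + 1) := by
  rw [eval_FKM, prod_eq_zero (mem_univ j) hj]
  ring

lemma eval_FKM_update_castSucc {v : Fin n} (hv : finRotate n v ≠ v) {x : Fin (n + 1) → R}
    (hxv : x v.castSucc = 0) (hxv' : x (finRotate n v).castSucc = 0) (t : R) :
    eval (update x v.castSucc t) (FKM n R ψ) =
      x ((finRotate n).symm v).castSucc ^ n * t + eval x (FKM n R ψ) := by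
  have hne : ∀ {i j : Fin n}, i ≠ j → i.castSucc ≠ j.castSucc :=
    (Fin.castSucc_injective n).ne
  have hxv'' : update x v.castSucc t (finRotate n v).castSucc = 0 := by
    rwa [update_of_ne (hne hv)]
  have hterm : ∀ i : Fin n,
      update x v.castSucc t i.castSucc ^ n *
          update x v.castSucc t (finRotate n i).castSucc =
        x i.castSucc ^ n * x (finRotate n i).castSucc +
          if finRotate n i = v then x i.castSucc ^ n * t else 0 := by
    intro i
    by_cases hi : i = v
    · rw [hi, hxv'', hxv', if_neg hv]
      ring
    · by_cases hi' : finRotate n i = v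
      · rw [update_of_ne (hne hi), hi', update_self, hxv, if_pos rfl]
        ring
      · rw [update_of_ne (hne hi), update_of_ne (hne hi'), if_neg hi', add_zero]
  rw [eval_FKM_of_apply_eq_zero ψ hxv'', eval_FKM_of_apply_eq_zero ψ hxv',
    sum_congr rfl fun i _ => hterm i, sum_add_distrib]
  simp_rw [← Equiv.eq_symm_apply, sum_ite_eq', mem_univ, if_true,
    update_of_ne (Fin.castSucc_lt_last v).ne']
  ring

lemma eval_FKM_update_zero_last [NeZero n] (t : R) :
    eval (update 0 (Fin.last n) t) (FKM n R ψ) = t ^ (n + 1) := by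
  rw [eval_FKM_of_apply_eq_zero ψ (update_of_ne (Fin.castSucc_lt_last (0 : Fin n)).ne t 0)]
  simp

end KleinMukai

lemma Fin.exists_not_and_finRotate {n : ℕ} {P : Fin n → Prop} {a b : Fin n} (ha : P a)
    (hb : ¬ P b) : ∃ v, ¬ P v ∧ P (finRotate n v) := by
  by_contra! h
  have hiter : ∀ k, ¬ P ((finRotate n)^[k] b) := by
    intro k
    induction k with
    | zero => exact hb
    | succ k ih => rw [iterate_succ_apply']; exact h _ ih
  have := b.neZero
  apply hiter (a - b).val
  rw [← finCycle_eq_finRotate_iterate, finCycle_apply, add_sub_cancel]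
  exact ha

lemma Fin.card_le_of_forall_val_lt {n : ℕ} {J : Finset (Fin (n + 1))}
    (hJ : ∀ i ∈ J, (i : ℕ) < n) : #J ≤ n :=
  calc #J ≤ #(Iio (Fin.last n)) := card_le_card fun i hi => mem_Iio.2 (Fin.lt_def.2 (hJ i hi))
    _ = n := by simp

section KleinMukaiSum

variable {n : ℕ} {F : Type*} [Field F] [Fintype F] [DecidableEq F] {Θ : AddChar F ℂ}
  (ψ : F)

lemma sum_zeroSlice_eval_FKM_eq_card_mul (hΘ : Θ ≠ 1) (w : Fˣ) {v : Fin n}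
    {J : Finset (Fin (n + 1))} (hv : v.castSucc ∉ J) (hv' : (finRotate n v).castSucc ∈ J) :
    ∑ x ∈ zeroSlice F J, Θ (w * eval x (FKM n F ψ)) = Fintype.card F *
      ∑ x ∈ zeroSlice F (insert ((finRotate n).symm v).castSucc (insert v.castSucc J)),
        Θ (w * eval x (FKM n F ψ)) := by
  have hrot : finRotate n v ≠ v := fun h => hv (h ▸ hv')
  rw [AddChar.sum_zeroSlice_eq_card_mul_of_affine hΘ hv _
    (fun x => w * x ((finRotate n).symm v).castSucc ^ n), zeroSlice_insert _ (insert _ J)]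
  · congr 2
    refine filter_congr fun x _ => ?_
    simp [pow_eq_zero_iff (Fin.pos v).ne']
  · intro x hx hxv t
    rw [eval_FKM_update_castSucc ψ hrot hxv (mem_zeroSlice.1 hx _ hv')]
    ring

lemma sum_units_sum_zeroSlice_eval_FKM_of_forall_castSucc_mem [NeZero n] (hΘ : Θ ≠ 1)
    {J : Finset (Fin (n + 1))} (hJ : ∀ i ∈ J, (i : ℕ) < n)
    (hall : ∀ i : Fin n, i.castSucc ∈ J) :
    ∑ w : Fˣ, ∑ x ∈ zeroSlice F J, Θ (w * eval x (FKM n F ψ)) = 0 := by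
  have hlast : Fin.last n ∉ J := fun h => (hJ _ h).ne rfl
  have huniv : insert (Fin.last n) J = univ := by
    ext j
    cases j using Fin.lastCases <;> simp [hall]
  simp_rw [sum_zeroSlice_eq_sum_sum_update hlast, huniv, zeroSlice_univ, sum_singleton,
    eval_FKM_update_zero_last]
  exact AddChar.sum_units_sum_apply_mul_pow hΘ n.succ_ne_zero

theorem sum_units_sum_zeroSlice_eval_FKM_eq_zero (hΘ : Θ ≠ 1) {J : Finset (Fin (n + 1))}
    (hJne : J.Nonempty) (hJ : ∀ i ∈ J, (i : ℕ) < n) :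
    ∑ w : Fˣ, ∑ x ∈ zeroSlice F J, Θ (w * eval x (FKM n F ψ)) = 0 := by
  obtain ⟨j, hj⟩ := hJne
  have : NeZero n := ⟨by have := hJ j hj; omega⟩
  by_cases hall : ∀ i : Fin n, i.castSucc ∈ J
  · exact sum_units_sum_zeroSlice_eval_FKM_of_forall_castSucc_mem ψ hΘ hJ hall
  obtain ⟨b, hb⟩ := not_forall.1 hall
  obtain ⟨a, rfl⟩ : ∃ a : Fin n, a.castSucc = j :=
    ⟨j.castLT (hJ j hj), Fin.castSucc_castLT _ _⟩
  obtain ⟨v, hv, hv'⟩ := Fin.exists_not_and_finRotate (P := fun i => i.castSucc ∈ J) hj hb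
  set J' := insert ((finRotate n).symm v).castSucc (insert v.castSucc J)
  have hJJ' : J ⊂ J' := (ssubset_insert hv).trans_subset (subset_insert _ _)
  have hJ' : ∀ i ∈ J', (i : ℕ) < n := by simpa [J'] using hJ
  rw [sum_congr rfl fun w _ => sum_zeroSlice_eval_FKM_eq_card_mul ψ hΘ w hv hv', ← mul_sum,
    sum_units_sum_zeroSlice_eval_FKM_eq_zero hΘ ⟨_, hJJ'.subset hj⟩ hJ', mul_zero]
termination_by n - #J
decreasing_by
  show n - #J' < n - #J
  have := card_lt_card hJJ'
  have := Fin.card_le_of_forall_val_lt hJ'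
  omega

end KleinMukaiSum

theorem klein_mukai_exponential_sum_vanishing_general (n : ℕ)
    (F : Type) [Field F] [Fintype F] [DecidableEq F]
    (Θ : AddChar F ℂ) (hΘ : ∃ a : F, Θ a ≠ 1) (ψ : F)
    (J : Finset (Fin (n+1))) (hJne : J.Nonempty) (hJ : ∀ i ∈ J, (i : ℕ) < n) :
    ∑ w : Fˣ, ∑ x ∈ Finset.univ.filter (fun x : Fin (n+1) → F => ∀ i ∈ J, x i = 0),
        Θ ((w : F) * MvPolynomial.eval x (FKM n F ψ)) = 0 := by
  obtain ⟨a, ha⟩ := hΘ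
  have hΘ' : Θ ≠ 1 := by
    rintro rfl
    exact ha (AddChar.one_apply a)
  -- The filter below is decided by `Nat.decidableForallFin`, not by the instance in `zeroSlice`.
  convert sum_units_sum_zeroSlice_eval_FKM_eq_zero ψ hΘ' hJne hJ using 4
  ext x
  simp

/-- for any nonempty set `J` of indices among `{0,…,n-1}`, the exponential
sum of `w·F_ψ` over the points whose coordinates indexed by `J` vanish is zero. -/
theorem klein_mukai_exponential_sum_vanishing (n : ℕ) (hn : 2 ≤ n)
    (F : Type) [Field F] [Fintype F] [DecidableEq F]
    (Θ : AddChar F ℂ) (hΘ : ∃ a : F, Θ a ≠ 1) (ψ : F)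
    (J : Finset (Fin (n+1))) (hJne : J.Nonempty) (hJ : ∀ i ∈ J, (i : ℕ) < n) :
    ∑ w : Fˣ, ∑ x ∈ Finset.univ.filter (fun x : Fin (n+1) → F => ∀ i ∈ J, x i = 0),
        Θ ((w : F) * MvPolynomial.eval x (FKM n F ψ)) = 0 :=
  klein_mukai_exponential_sum_vanishing_general n F Θ hΘ ψ J hJne hJ

end
end

section
/- Let q_0,…,q_n be positive integers (n ≥ 1), let d^T = q_0 + ⋯ + q_n, and set r_i = gcd(q_i, d^T) for each i. Let K = { k ∈ ℤ : k > 1, k divides d^T, and k does not divide r_i for any i = 0,…,n }. Then α ∖ I = { j/k : k ∈ K, 1 ≤ j ≤ k−1, gcd(j,k) = 1 }; that is, the elements of α not lying in I are exactly the reduced fractions in [0,1) whose denominator lies in K. -/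
/-!
A rational `a` can be written as `j / m` with `j < m` exactly when `0 ≤ a < 1` and its
reduced denominator divides `m`. Hence `α ∖ I` consists of the `a ∈ [0, 1)` whose denominator
divides `d^T` but no `q_i` (equivalently, no `gcd (q_i, d^T)`). Such an `a` is nonzero because
`0 ∈ β`, so it is the reduced fraction `a.num / a.den` with `1 ≤ a.num < a.den`.
-/

namespace Rat

theorem eq_natCast_div_den_of_num_eq {a : ℚ} {p : ℕ} (hp : a.num = p) : a = p / a.den := by
  simpa [hp] using (num_div_den a).symm

theorem exists_natCast_div_eq_iff_den_dvd {a : ℚ} {m : ℕ} (hm : 0 < m) :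
    (∃ j : ℕ, j < m ∧ a = j / m) ↔ 0 ≤ a ∧ a < 1 ∧ a.den ∣ m := by
  constructor
  · rintro ⟨j, hj, rfl⟩
    refine ⟨by positivity, (div_lt_one (by exact_mod_cast hm)).2 (by exact_mod_cast hj), ?_⟩
    exact_mod_cast natCast_div_eq_divInt j m ▸ den_dvd j m
  · rintro ⟨ha0, ha1, c, rfl⟩
    obtain ⟨p, hp⟩ := Int.eq_ofNat_of_zero_le (num_nonneg.2 ha0)
    have hpd : p < a.den := by exact_mod_cast hp ▸ num_lt_denom_iff.2 ha1
    have hc : 0 < c := Nat.pos_of_mul_pos_left hm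
    refine ⟨p * c, Nat.mul_lt_mul_of_pos_right hpd hc, ?_⟩
    rw [Nat.cast_mul, Nat.cast_mul, mul_div_mul_right _ _ (by positivity)]
    exact eq_natCast_div_den_of_num_eq hp

theorem den_natCast_div_of_coprime {j k : ℕ} (hk : 0 < k) (h : Nat.Coprime j k) :
    ((j : ℚ) / k).den = k := by
  have := den_div_eq_of_coprime (a := j) (b := k) (by exact_mod_cast hk) (by simpa using h)
  rw [← Int.ofNat_inj]
  simpa using this

theorem exists_coprime_div_iff {a : ℚ} {P : ℕ → Prop} :
    (∃ k j : ℕ, P k ∧ 1 ≤ j ∧ j ≤ k - 1 ∧ Nat.gcd j k = 1 ∧ a = j / k) ↔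
      0 < a ∧ a < 1 ∧ P a.den := by
  constructor
  · rintro ⟨k, j, hP, hj1, hjk, hcop, rfl⟩
    have hk : 0 < k := by omega
    have hjk' : j < k := by omega
    refine ⟨by positivity, (div_lt_one (by exact_mod_cast hk)).2 (by exact_mod_cast hjk'), ?_⟩
    rwa [den_natCast_div_of_coprime hk hcop]
  · rintro ⟨ha0, ha1, hP⟩
    obtain ⟨p, hp⟩ := Int.eq_ofNat_of_zero_le (num_pos.2 ha0).le
    have hpd : p < a.den := by exact_mod_cast hp ▸ num_lt_denom_iff.2 ha1
    have hp0 : 0 < p := by exact_mod_cast hp ▸ num_pos.2 ha0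
    exact ⟨a.den, p, hP, hp0, by omega, by simpa [hp] using a.reduced,
      eq_natCast_div_den_of_num_eq hp⟩

end Rat

theorem alpha_minus_I_reduced_fractions_general (n : ℕ)
    (q : Fin (n+1) → ℕ) (hq : ∀ i, 0 < q i) :
    ∀ a : ℚ,
      ((∃ j : ℕ, j < (∑ i, q i) ∧ a = (j : ℚ) / ((∑ i, q i : ℕ) : ℚ)) ∧
        ¬ (∃ i : Fin (n+1), ∃ j : ℕ, j < q i ∧ a = (j : ℚ) / (q i : ℚ)))
      ↔ ∃ k j : ℕ,
          (1 < k ∧ k ∣ (∑ i, q i) ∧ ∀ i, ¬ (k ∣ Nat.gcd (q i) (∑ i, q i))) ∧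
          1 ≤ j ∧ j ≤ k - 1 ∧ Nat.gcd j k = 1 ∧ a = (j : ℚ) / (k : ℚ) := by
  intro a
  have hd : 0 < ∑ i, q i := Finset.sum_pos (fun i _ => hq i) Finset.univ_nonempty
  simp only [Rat.exists_natCast_div_eq_iff_den_dvd hd,
    Rat.exists_natCast_div_eq_iff_den_dvd (hq _), Rat.exists_coprime_div_iff, Nat.dvd_gcd_iff]
  constructor
  · rintro ⟨⟨ha0, ha1, hdvd⟩, hnot⟩
    have hden : ∀ i, ¬ a.den ∣ q i := fun i h => hnot ⟨i, ha0, ha1, h⟩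
    have hden1 : a.den ≠ 1 := fun h => hden 0 (by simp [h])
    have ha : 0 < a := ha0.lt_of_ne' fun h => hden1 (by simp [h])
    exact ⟨ha, ha1, lt_of_le_of_ne a.pos (Ne.symm hden1), hdvd, fun i h => hden i h.1⟩
  · rintro ⟨ha0, ha1, -, hdvd, hden⟩
    exact ⟨⟨ha0.le, ha1, hdvd⟩, fun ⟨i, _, _, h⟩ => hden i ⟨h, hdvd⟩⟩

/-- with `α = {j/d^T : 0 ≤ j < d^T}`, `β = ⋃_i {j/q_i : 0 ≤ j < q_i}` and
`I = α ∩ β`, the elements of `α ∖ I` are exactly the reduced fractions `j/k` in `[0,1)`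
whose denominator `k` lies in
`K = {k > 1 : k ∣ d^T and k ∤ gcd(q_i, d^T) for all i}`. -/
theorem alpha_minus_I_reduced_fractions (n : ℕ) (hn : 1 ≤ n)
    (q : Fin (n+1) → ℕ) (hq : ∀ i, 0 < q i) :
    ∀ a : ℚ,
      ((∃ j : ℕ, j < (∑ i, q i) ∧ a = (j : ℚ) / ((∑ i, q i : ℕ) : ℚ)) ∧
        ¬ (∃ i : Fin (n+1), ∃ j : ℕ, j < q i ∧ a = (j : ℚ) / (q i : ℚ)))
      ↔ ∃ k j : ℕ,
          (1 < k ∧ k ∣ (∑ i, q i) ∧ ∀ i, ¬ (k ∣ Nat.gcd (q i) (∑ i, q i))) ∧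
          1 ≤ j ∧ j ≤ k - 1 ∧ Nat.gcd j k = 1 ∧ a = (j : ℚ) / (k : ℚ) :=
  alpha_minus_I_reduced_fractions_general n q hq
end

section
/- Let q_0,…,q_n be positive integers (n ≥ 1), let d^T = q_0 + ⋯ + q_n, set r_i = gcd(q_i, d^T), and let K = { k ∈ ℤ : k > 1, k divides d^T, and k does not divide r_i for any i }. Then in ℂ[x], the polynomial g_α(x) = ∏_{a ∈ α ∖ I} (x − e^{2πi a}) equals ∏_{k ∈ K} Φ_k(x), the product of the k-th cyclotomic polynomials over k ∈ K; in particular g_α has integer coefficients. -/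
/-!
The points `e^{2πia}`, `a ∈ [0, 1) ∩ ℚ`, are distinct, and `e^{2πia}` is a primitive root of
unity of order exactly `den a`; conversely every primitive `k`-th root of unity arises from a
unique such `a` with `den a = k`. Hence `∏ (x - e^{2πia})` over the rationals `a ∈ [0, 1)` whose
denominator lies in a set `S` is `∏_{k ∈ S} Φ_k`. For `α ∖ I` that set is
`{k ∣ d^T : k ∤ q_i for all i}`, which is `K`.
-/

open Polynomial
open scoped BigOperators Classical

noncomputable section

theorem Rat.exists_lt_eq_natCast_div_iff {d : ℕ} (hd : d ≠ 0) {a : ℚ} :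
    (∃ j < d, a = (j : ℚ) / d) ↔ 0 ≤ a ∧ a < 1 ∧ a.den ∣ d := by
  have hd' : (0 : ℚ) < d := by positivity
  constructor
  · rintro ⟨j, hj, rfl⟩
    refine ⟨by positivity, (div_lt_one hd').2 (mod_cast hj), ?_⟩
    have h := Rat.den_dvd j d
    rw [Rat.divInt_eq_div] at h
    simp only [Int.cast_natCast, Int.natCast_dvd_natCast] at h
    exact h
  · rintro ⟨ha0, ha1, c, hc⟩
    have hj : ((a.num.toNat * c : ℕ) : ℚ) = a * d := by
      have hnum : (a.num.toNat : ℚ) = a.num := mod_cast Int.toNat_of_nonneg (Rat.num_nonneg.2 ha0)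
      push_cast [hnum, hc, ← Rat.mul_den_eq_num]
      ring
    refine ⟨a.num.toNat * c, ?_, by rw [hj, mul_div_cancel_right₀ _ hd'.ne']⟩
    exact_mod_cast (hj ▸ (mul_lt_iff_lt_one_left hd').2 ha1 : ((a.num.toNat * c : ℕ) : ℚ) < d)

theorem Nat.mem_divisors_and_forall_not_dvd_gcd_iff {ι : Type*} [Nonempty ι] (q : ι → ℕ)
    {d k : ℕ} (hd : d ≠ 0) :
    (k ∈ d.divisors ∧ 1 < k ∧ ∀ i, ¬ k ∣ Nat.gcd (q i) d) ↔ k ∣ d ∧ ∀ i, ¬ k ∣ q i := by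
  simp only [Nat.mem_divisors, Nat.dvd_gcd_iff, not_and]
  constructor
  · rintro ⟨⟨hkd, -⟩, -, hq⟩
    exact ⟨hkd, fun i hki => hq i hki hkd⟩
  · rintro ⟨hkd, hq⟩
    have hk0 : k ≠ 0 := by rintro rfl; exact hd (Nat.eq_zero_of_zero_dvd hkd)
    have hk1 : k ≠ 1 := fun h => hq (Classical.arbitrary ι) (h ▸ one_dvd _)
    exact ⟨⟨hkd, hd⟩, by omega, fun i hki _ => hq i hki⟩

namespace Complex

open Real

theorem injOn_exp_two_pi_I_mul_Ico :
    Set.InjOn (fun t : ℝ => exp (2 * π * I * t)) (Set.Ico 0 1) := by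
  intro s ⟨hs0, hs1⟩ t ⟨ht0, ht1⟩ hst
  have h := Circle.exp_injOn_Ico (a := 0) (b := 2 * π) (by simp)
    (x₁ := 2 * π * s) (x₂ := 2 * π * t) ⟨by positivity, by nlinarith [pi_pos]⟩
    ⟨by positivity, by nlinarith [pi_pos]⟩
    (Circle.ext (by simp only [Circle.coe_exp]; push_cast; convert hst using 2 <;> ring))
  simpa [pi_ne_zero] using h

theorem exists_rat_exp_eq_of_isPrimitiveRoot {z : ℂ} {k : ℕ} (hk : k ≠ 0)
    (hz : IsPrimitiveRoot z k) :
    ∃ a : ℚ, 0 ≤ a ∧ a < 1 ∧ a.den = k ∧ exp (2 * π * I * a) = z := by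
  obtain ⟨i, hik, hcop, rfl⟩ := (isPrimitiveRoot_iff z k hk).1 hz
  have hk' : (0 : ℚ) < k := by positivity
  refine ⟨i / k, by positivity, (div_lt_one hk').2 (mod_cast hik), ?_, by push_cast; rfl⟩
  have h := Rat.den_div_eq_of_coprime (a := i) (b := k) (by omega) (by simpa using hcop)
  simpa only [Int.cast_natCast, Nat.cast_inj] using h

theorem prod_X_sub_exp_eq_prod_cyclotomic {A : Finset ℚ} {S : Finset ℕ}
    (hA : ∀ a, a ∈ A ↔ 0 ≤ a ∧ a < 1 ∧ a.den ∈ S) :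
    ∏ a ∈ A, (X - C (exp (2 * π * I * a))) = ∏ k ∈ S, cyclotomic k ℂ := by
  have hinj : Set.InjOn (fun a : ℚ => exp (2 * π * I * a)) A := by
    intro a ha b hb hab
    obtain ⟨ha0, ha1, -⟩ := (hA a).1 ha
    obtain ⟨hb0, hb1, -⟩ := (hA b).1 hb
    have := injOn_exp_two_pi_I_mul_Ico (x₁ := a) (x₂ := b) ⟨mod_cast ha0, mod_cast ha1⟩
      ⟨mod_cast hb0, mod_cast hb1⟩ (by simpa using hab)
    exact_mod_cast this
  have himage : A.image (fun a : ℚ => exp (2 * π * I * a)) = S.biUnion (primitiveRoots · ℂ) := by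
    ext z
    simp only [Finset.mem_image, Finset.mem_biUnion, hA]
    constructor
    · rintro ⟨a, ⟨-, -, ha⟩, rfl⟩
      exact ⟨a.den, ha, (mem_primitiveRoots a.pos).2 (isPrimitiveRoot_exp_rat a)⟩
    · rintro ⟨k, hk, hz⟩
      have hk0 : k ≠ 0 := by rintro rfl; simp at hz
      obtain ⟨a, ha0, ha1, rfl, rfl⟩ :=
        exists_rat_exp_eq_of_isPrimitiveRoot hk0 (isPrimitiveRoot_of_mem_primitiveRoots hz)
      exact ⟨a, ⟨ha0, ha1, hk⟩, rfl⟩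
  have hdisj : (S : Set ℕ).PairwiseDisjoint (primitiveRoots · ℂ) := fun k _ l _ hkl =>
    Finset.disjoint_left.2 fun z hk hl =>
      hkl ((isPrimitiveRoot_of_mem_primitiveRoots hk).unique
        (isPrimitiveRoot_of_mem_primitiveRoots hl))
  rw [← Finset.prod_image (f := fun z => X - C z) hinj, himage, Finset.prod_biUnion hdisj]
  refine Finset.prod_congr rfl fun k _ => ?_
  rcases eq_or_ne k 0 with rfl | hk
  · simp
  · exact (cyclotomic_eq_prod_X_sub_primitiveRoots (isPrimitiveRoot_exp k hk)).symm

end Complex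

theorem g_alpha_product_of_cyclotomics_general (n : ℕ)
    (q : Fin (n+1) → ℕ) (hq : ∀ i, 0 < q i) :
    ∀ (dT : ℕ), dT = ∑ i, q i →
    ∀ (αF IF : Finset ℚ),
      αF = (Finset.range dT).image (fun j : ℕ => (j : ℚ) / (dT : ℚ)) →
      IF = αF.filter (fun a => ∃ i : Fin (n+1), ∃ j : ℕ, j < q i ∧ a = (j : ℚ) / (q i : ℚ)) →
    ∀ (KF : Finset ℕ),
      KF = dT.divisors.filter (fun k => 1 < k ∧ ∀ i, ¬ (k ∣ Nat.gcd (q i) dT)) →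
    ∀ (gα : Polynomial ℂ),
      gα = ∏ a ∈ αF \ IF,
        (Polynomial.X - Polynomial.C (Complex.exp (2 * Real.pi * Complex.I * (a : ℂ)))) →
    gα = (∏ k ∈ KF, Polynomial.cyclotomic k ℂ) ∧
      ∃ gZ : Polynomial ℤ, gZ.map (Int.castRingHom ℂ) = gα := by
  intro dT hdT αF IF hα hI KF hK gα hg
  have hdT0 : dT ≠ 0 := hdT ▸ (Finset.sum_pos (fun i _ => hq i) Finset.univ_nonempty).ne'
  have hαmem : ∀ a, a ∈ αF ↔ 0 ≤ a ∧ a < 1 ∧ a.den ∣ dT := fun a => by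
    simp only [hα, ← Rat.exists_lt_eq_natCast_div_iff hdT0, Finset.mem_image, Finset.mem_range,
      eq_comm (a := a)]
  have hmem : ∀ a, a ∈ αF \ IF ↔ 0 ≤ a ∧ a < 1 ∧ a.den ∈ KF := fun a => by
    have hIq (i) := Rat.exists_lt_eq_natCast_div_iff (hq i).ne' (a := a)
    rw [hK, Finset.mem_filter, Nat.mem_divisors_and_forall_not_dvd_gcd_iff q hdT0,
      Finset.mem_sdiff, hI, Finset.mem_filter]
    simp only [hαmem, hIq]
    grind
  have hcyc := hg.trans (Complex.prod_X_sub_exp_eq_prod_cyclotomic hmem)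
  refine ⟨hcyc, ∏ k ∈ KF, cyclotomic k ℤ, ?_⟩
  simp only [Polynomial.map_prod, map_cyclotomic, hcyc]

/-- the polynomial `g_α = ∏_(a ∈ α∖I) (x - e^(2πia))` equals the product
of cyclotomic polynomials `∏_(k ∈ K) Φ_k` where
`K = {k > 1 : k ∣ d^T and k ∤ gcd(q_i, d^T) for all i}`; in particular it has integer
coefficients. -/
theorem g_alpha_product_of_cyclotomics (n : ℕ) (hn : 1 ≤ n)
    (q : Fin (n+1) → ℕ) (hq : ∀ i, 0 < q i) :
    ∀ (dT : ℕ), dT = ∑ i, q i →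
    ∀ (αF IF : Finset ℚ),
      αF = (Finset.range dT).image (fun j : ℕ => (j : ℚ) / (dT : ℚ)) →
      IF = αF.filter (fun a => ∃ i : Fin (n+1), ∃ j : ℕ, j < q i ∧ a = (j : ℚ) / (q i : ℚ)) →
    ∀ (KF : Finset ℕ),
      KF = dT.divisors.filter (fun k => 1 < k ∧ ∀ i, ¬ (k ∣ Nat.gcd (q i) dT)) →
    ∀ (gα : Polynomial ℂ),
      gα = ∏ a ∈ αF \ IF,
        (Polynomial.X - Polynomial.C (Complex.exp (2 * Real.pi * Complex.I * (a : ℂ)))) →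
    gα = (∏ k ∈ KF, Polynomial.cyclotomic k ℂ) ∧
      ∃ gZ : Polynomial ℤ, gZ.map (Int.castRingHom ℂ) = gα :=
  g_alpha_product_of_cyclotomics_general n q hq
end
end

section
/- Let q_0,…,q_n be positive integers (n ≥ 1), let d^T = q_0 + ⋯ + q_n, and let L = { k ∈ ℤ : k ≥ 1 and k divides gcd(q_i, d^T) for some i = 0,…,n }. Let β ∖ I denote the multiset obtained from β by removing one occurrence of each element of I. Then in ℂ[x], the polynomial g_β(x) = ∏_{b ∈ β ∖ I} (x − e^{2πi b}) (product with multiplicity) satisfies g_β(x) · ∏_{k ∈ L} Φ_k(x) = ∏_{i=0}^n (x^{q_i} − 1); in particular g_β has integer coefficients. -/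
/-!
The points `j / q` with `j < q` lie in `[0, 1)`, where `b ↦ e^{2πib}` is injective, and are sent
onto the `q`-th roots of unity. Hence `∏_{b ∈ β} (x - e^{2πib}) = ∏ᵢ (x^{qᵢ} - 1)`, and `I` is
mapped bijectively onto the roots of unity `z` with `z^{d^T} = 1` and `z^{qᵢ} = 1` for some `i`.
Grouping these roots by their order, which runs exactly through `L`, gives
`∏_{a ∈ I} (x - e^{2πia}) = ∏_{k ∈ L} Φ_k`, and `I ⊆ β` yields the product formula. Dividing an
integer polynomial by the monic integer polynomial `∏_{k ∈ L} Φ_k` keeps integer coefficients.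
-/

open Polynomial
open scoped BigOperators Classical

noncomputable section

lemma filter_nthRootsFinset_eq_biUnion_primitiveRoots {R : Type*} [CommRing R] [IsDomain R]
    (N : ℕ) (P : ℕ → Prop) [DecidablePred P] :
    (nthRootsFinset N (1 : R)).filter (fun z => P (orderOf z)) =
      (N.divisors.filter P).biUnion fun k => primitiveRoots k R := by
  ext z
  simp only [IsPrimitiveRoot.nthRoots_one_eq_biUnion_primitiveRoots, Finset.mem_filter,
    Finset.mem_biUnion]
  constructor
  · rintro ⟨⟨k, hk, hz⟩, hP⟩
    have hk0 := Nat.pos_of_mem_divisors hk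
    rw [((mem_primitiveRoots hk0).mp hz).eq_orderOf] at hk hz
    exact ⟨orderOf z, ⟨hk, hP⟩, hz⟩
  · rintro ⟨k, ⟨hk, hP⟩, hz⟩
    refine ⟨⟨k, hk, hz⟩, ?_⟩
    rwa [← ((mem_primitiveRoots (Nat.pos_of_mem_divisors hk)).mp hz).eq_orderOf]

lemma prod_cyclotomic_filter_divisors {K : Type*} [CommRing K] [IsDomain K] {N : ℕ} {ζ : K}
    (hζ : IsPrimitiveRoot ζ N) (P : ℕ → Prop) [DecidablePred P] :
    ∏ k ∈ N.divisors.filter P, cyclotomic k K =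
      ∏ z ∈ (nthRootsFinset N (1 : K)).filter (fun z => P (orderOf z)), (X - C z) := by
  rw [filter_nthRootsFinset_eq_biUnion_primitiveRoots,
    Finset.prod_biUnion fun k _ l _ hkl => IsPrimitiveRoot.disjoint hkl]
  refine Finset.prod_congr rfl fun k hk => ?_
  obtain ⟨hkN, hN⟩ := Nat.mem_divisors.mp (Finset.mem_filter.mp hk).1
  have hζk : IsPrimitiveRoot (ζ ^ (N / k)) k := by
    simpa [Nat.div_div_self hkN hN] using
      hζ.pow_of_dvd ((Nat.div_ne_zero_iff_of_dvd hkN).mpr ⟨hN, ne_zero_of_dvd_ne_zero hN hkN⟩)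
        (Nat.div_dvd_of_dvd hkN)
  exact cyclotomic_eq_prod_X_sub_primitiveRoots hζk

lemma exists_map_eq_of_mul_map_eq_map {R S : Type*} [CommRing R] [CommRing S] [IsDomain S]
    {f : R →+* S} (hf : Function.Injective f) {p Q : R[X]} (hp : p.Monic) {g : S[X]}
    (h : g * p.map f = Q.map f) : ∃ g' : R[X], g'.map f = g := by
  obtain ⟨g', rfl⟩ := (map_dvd_map f hf hp).mp (h ▸ dvd_mul_left _ _)
  refine ⟨g', mul_right_cancel₀ (hp.map f).ne_zero ?_⟩
  rw [h, Polynomial.map_mul, mul_comm]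

def expTwoPiI (b : ℚ) : ℂ := Complex.exp (2 * Real.pi * Complex.I * b)

/-- `ratGrid d^T` is `α` and `ratGrid qᵢ` is `βᵢ`. -/
def ratGrid (m : ℕ) : Finset ℚ := (Finset.range m).image fun j : ℕ => (j : ℚ) / (m : ℚ)

lemma mem_ratGrid {m : ℕ} {a : ℚ} : a ∈ ratGrid m ↔ ∃ j < m, a = (j : ℚ) / m := by
  simp only [ratGrid, Finset.mem_image, Finset.mem_range, eq_comm (a := a)]

lemma ratGrid_subset_Ico (m : ℕ) : (ratGrid m : Set ℚ) ⊆ Set.Ico 0 1 := by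
  intro a ha
  obtain ⟨j, hj, rfl⟩ := mem_ratGrid.mp ha
  have hm : (0 : ℚ) < m := by exact_mod_cast (Nat.zero_le j).trans_lt hj
  exact ⟨by positivity, (div_lt_one hm).mpr (by exact_mod_cast hj)⟩

lemma expTwoPiI_natCast_div (j m : ℕ) :
    expTwoPiI (j / m) = Complex.exp (2 * Real.pi * Complex.I / m) ^ j := by
  rw [expTwoPiI, ← Complex.exp_nat_mul]
  congr 1
  push_cast
  ring

lemma expTwoPiI_natCast_div_pow_self (j m : ℕ) : expTwoPiI (j / m) ^ m = 1 := by
  rcases Nat.eq_zero_or_pos m with rfl | hm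
  · exact pow_zero _
  · rw [expTwoPiI_natCast_div, ← pow_mul, mul_comm j m, pow_mul,
      (Complex.isPrimitiveRoot_exp m hm.ne').pow_eq_one, one_pow]

lemma expTwoPiI_injOn_Ico : Set.InjOn expTwoPiI (Set.Ico 0 1) := by
  intro a ⟨ha0, ha1⟩ b ⟨hb0, hb1⟩ hab
  obtain ⟨n, hn⟩ := Complex.exp_eq_exp_iff_exists_int.mp hab
  have h2πI : 2 * (Real.pi : ℂ) * Complex.I ≠ 0 := by simp [Real.pi_ne_zero]
  have hC : (a : ℂ) = b + n := mul_left_cancel₀ h2πI (by linear_combination hn)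
  have hQ : a = b + n := by exact_mod_cast hC
  have hn0 : n = 0 := by
    have : |(n : ℚ)| < 1 := abs_lt.mpr ⟨by linarith, by linarith⟩
    exact Int.abs_lt_one_iff.mp (by exact_mod_cast this)
  simpa [hn0] using hQ

lemma image_expTwoPiI_ratGrid (m : ℕ) :
    (ratGrid m).image expTwoPiI = nthRootsFinset m (1 : ℂ) := by
  rcases Nat.eq_zero_or_pos m with rfl | hm
  · simp [ratGrid]
  ext z
  rw [mem_nthRootsFinset hm, Finset.mem_image]
  constructor
  · rintro ⟨a, ha, rfl⟩
    obtain ⟨j, -, rfl⟩ := mem_ratGrid.mp ha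
    exact expTwoPiI_natCast_div_pow_self j m
  · intro hz
    have := NeZero.of_pos hm
    obtain ⟨j, hj, rfl⟩ := (Complex.isPrimitiveRoot_exp m hm.ne').eq_pow_of_pow_eq_one hz
    exact ⟨j / m, mem_ratGrid.mpr ⟨j, hj, rfl⟩, expTwoPiI_natCast_div j m⟩

lemma image_expTwoPiI_filter_ratGrid {ι : Type*} (m : ℕ) (q : ι → ℕ)
    [DecidablePred fun a : ℚ => ∃ i, a ∈ ratGrid (q i)]
    [DecidablePred fun z : ℂ => ∃ i, z ∈ nthRootsFinset (q i) (1 : ℂ)] :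
    ((ratGrid m).filter fun a => ∃ i, a ∈ ratGrid (q i)).image expTwoPiI =
      (nthRootsFinset m (1 : ℂ)).filter fun z => ∃ i, z ∈ nthRootsFinset (q i) (1 : ℂ) := by
  ext z
  simp only [Finset.mem_filter, ← image_expTwoPiI_ratGrid, Finset.mem_image]
  constructor
  · rintro ⟨a, ⟨ha, i, hai⟩, rfl⟩
    exact ⟨⟨a, ha, rfl⟩, i, a, hai, rfl⟩
  · rintro ⟨⟨a, ha, rfl⟩, i, b, hb, hba⟩
    obtain rfl : b = a :=
      expTwoPiI_injOn_Ico (ratGrid_subset_Ico _ hb) (ratGrid_subset_Ico _ ha) hba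
    exact ⟨b, ⟨ha, i, hb⟩, rfl⟩

lemma X_pow_sub_one_eq_prod_expTwoPiI {m : ℕ} (hm : 0 < m) :
    (X : ℂ[X]) ^ m - 1 = ∏ j ∈ Finset.range m, (X - C (expTwoPiI (j / m))) := by
  simpa [expTwoPiI_natCast_div] using
    X_pow_sub_C_eq_prod (Complex.isPrimitiveRoot_exp m hm.ne') hm (one_pow m)

lemma prod_map_X_sub_C_expTwoPiI_sum {ι : Type*} (s : Finset ι) {q : ι → ℕ} (hq : ∀ i, 0 < q i) :
    ((∑ i ∈ s, (Finset.range (q i)).val.map fun j : ℕ => (j : ℚ) / q i).map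
        fun b => X - C (expTwoPiI b)).prod = ∏ i ∈ s, ((X : ℂ[X]) ^ q i - 1) := by
  rw [← Multiset.coe_mapAddMonoidHom, map_sum, Multiset.prod_sum]
  refine Finset.prod_congr rfl fun i _ => ?_
  rw [X_pow_sub_one_eq_prod_expTwoPiI (hq i)]
  simp [Finset.prod_eq_multiset_prod, Multiset.map_map]

lemma val_le_sum_map_div {ι : Type*} [Fintype ι] (q : ι → ℕ) {s : Finset ℚ}
    (hs : ∀ a ∈ s, ∃ i, a ∈ ratGrid (q i)) :
    s.val ≤ ∑ i, (Finset.range (q i)).val.map fun j : ℕ => (j : ℚ) / q i := by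
  rw [Multiset.le_iff_subset s.nodup]
  intro a ha
  obtain ⟨i, hai⟩ := hs a ha
  obtain ⟨j, hj, rfl⟩ := mem_ratGrid.mp hai
  rw [Multiset.mem_sum]
  exact ⟨i, Finset.mem_univ i, Multiset.mem_map.mpr ⟨j, by simpa using hj, rfl⟩⟩

lemma prod_cyclotomic_filter_dvd_gcd {ι : Type*} {m : ℕ} (hm : 0 < m) {q : ι → ℕ}
    (hq : ∀ i, 0 < q i) [DecidablePred fun k : ℕ => ∃ i, k ∣ (q i).gcd m]
    [DecidablePred fun a : ℚ => ∃ i, a ∈ ratGrid (q i)] :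
    ∏ k ∈ m.divisors.filter (fun k => ∃ i, k ∣ (q i).gcd m), cyclotomic k ℂ =
      ∏ a ∈ (ratGrid m).filter (fun a => ∃ i, a ∈ ratGrid (q i)), (X - C (expTwoPiI a)) := by
  have hinj : Set.InjOn expTwoPiI ((ratGrid m).filter fun a => ∃ i, a ∈ ratGrid (q i)) :=
    expTwoPiI_injOn_Ico.mono
      ((Finset.coe_subset.mpr (Finset.filter_subset _ _)).trans (ratGrid_subset_Ico m))
  rw [prod_cyclotomic_filter_divisors (Complex.isPrimitiveRoot_exp m hm.ne'),
    ← Finset.prod_image (f := fun z => X - C z) hinj, image_expTwoPiI_filter_ratGrid]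
  refine Finset.prod_congr ?_ fun _ _ => rfl
  ext z
  simp only [Finset.mem_filter, and_congr_right_iff]
  intro hz
  rw [mem_nthRootsFinset hm] at hz
  simp only [mem_nthRootsFinset (hq _), Nat.dvd_gcd_iff, orderOf_dvd_iff_pow_eq_one, hz, and_true]

theorem g_beta_product_formula_general (n : ℕ)
    (q : Fin (n+1) → ℕ) (hq : ∀ i, 0 < q i) :
    ∀ (dT : ℕ), dT = ∑ i, q i →
    ∀ (αF IF : Finset ℚ),
      αF = (Finset.range dT).image (fun j : ℕ => (j : ℚ) / (dT : ℚ)) →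
      IF = αF.filter (fun a => ∃ i : Fin (n+1), ∃ j : ℕ, j < q i ∧ a = (j : ℚ) / (q i : ℚ)) →
    ∀ (βM : Multiset ℚ),
      βM = ∑ i : Fin (n+1), ((Finset.range (q i)).val.map (fun j : ℕ => (j : ℚ) / (q i : ℚ))) →
    ∀ (LF : Finset ℕ),
      LF = dT.divisors.filter (fun k => ∃ i : Fin (n+1), k ∣ Nat.gcd (q i) dT) →
    ∀ (gβ : Polynomial ℂ),
      gβ = ((βM - IF.val).map (fun b : ℚ =>
        Polynomial.X - Polynomial.C (Complex.exp (2 * Real.pi * Complex.I * (b : ℂ))))).prod →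
    gβ * (∏ k ∈ LF, Polynomial.cyclotomic k ℂ)
        = ∏ i : Fin (n+1), ((Polynomial.X : Polynomial ℂ) ^ (q i) - 1) ∧
      ∃ gZ : Polynomial ℤ, gZ.map (Int.castRingHom ℂ) = gβ := by
  rintro dT hdT αF IF rfl hI βM hβ LF hL gβ hgβ
  have hdT0 : 0 < dT := hdT ▸ Finset.sum_pos (fun i _ => hq i) Finset.univ_nonempty
  replace hI : IF = (ratGrid dT).filter fun a => ∃ i, a ∈ ratGrid (q i) := by
    rw [hI]
    simp only [mem_ratGrid]
    rfl
  have hI_le : IF.val ≤ βM := hβ ▸ val_le_sum_map_div q fun a ha => by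
    rw [hI, Finset.mem_filter] at ha
    exact ha.2
  have hmain : gβ * ∏ k ∈ LF, cyclotomic k ℂ = ∏ i, ((X : ℂ[X]) ^ q i - 1) := by
    change gβ = ((βM - IF.val).map fun b => X - C (expTwoPiI b)).prod at hgβ
    rw [hgβ, hL, prod_cyclotomic_filter_dvd_gcd hdT0 hq, ← hI, Finset.prod_eq_multiset_prod,
      ← Multiset.prod_add, ← Multiset.map_add, tsub_add_cancel_of_le hI_le, hβ,
      prod_map_X_sub_C_expTwoPiI_sum _ hq]
  refine ⟨hmain, exists_map_eq_of_mul_map_eq_map (RingHom.injective_int _)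
    (monic_prod_of_monic LF _ fun k _ => cyclotomic.monic k ℤ) (Q := ∏ i, (X ^ q i - 1)) ?_⟩
  simpa [Polynomial.map_prod] using hmain

/-- the polynomial `g_β = ∏_(b ∈ β∖I) (x - e^(2πib))` (product over the
multiset `β` with one occurrence of each element of `I` removed) satisfies
`g_β · ∏_(k ∈ L) Φ_k = ∏_i (x^(q_i) - 1)` where
`L = {k ≥ 1 : k ∣ gcd(q_i, d^T) for some i}`; in particular it has integer
coefficients. -/
theorem g_beta_product_formula (n : ℕ) (hn : 1 ≤ n)
    (q : Fin (n+1) → ℕ) (hq : ∀ i, 0 < q i) :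
    ∀ (dT : ℕ), dT = ∑ i, q i →
    ∀ (αF IF : Finset ℚ),
      αF = (Finset.range dT).image (fun j : ℕ => (j : ℚ) / (dT : ℚ)) →
      IF = αF.filter (fun a => ∃ i : Fin (n+1), ∃ j : ℕ, j < q i ∧ a = (j : ℚ) / (q i : ℚ)) →
    ∀ (βM : Multiset ℚ),
      βM = ∑ i : Fin (n+1), ((Finset.range (q i)).val.map (fun j : ℕ => (j : ℚ) / (q i : ℚ))) →
    ∀ (LF : Finset ℕ),
      LF = dT.divisors.filter (fun k => ∃ i : Fin (n+1), k ∣ Nat.gcd (q i) dT) →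
    ∀ (gβ : Polynomial ℂ),
      gβ = ((βM - IF.val).map (fun b : ℚ =>
        Polynomial.X - Polynomial.C (Complex.exp (2 * Real.pi * Complex.I * (b : ℂ))))).prod →
    gβ * (∏ k ∈ LF, Polynomial.cyclotomic k ℂ)
        = ∏ i : Fin (n+1), ((Polynomial.X : Polynomial ℂ) ^ (q i) - 1) ∧
      ∃ gZ : Polynomial ℤ, gZ.map (Int.castRingHom ℂ) = gβ :=
  g_beta_product_formula_general n q hq

end
end

section
/- Let n ≥ 2 and let G = { (λ_0,…,λ_n) ∈ ℂ^{n+1} : λ_i^{n+1} = 1 for all i and λ_0 λ_1 ⋯ λ_n = 1 } be the group of symplectic diagonal symmetries of the Fermat polynomial x_0^{n+1} + ⋯ + x_n^{n+1}. Then for integers a_0,…,a_n with 0 ≤ a_i ≤ n−1 for all i, the monomial x_0^{a_0} ⋯ x_n^{a_n} is G-invariant (that is, λ_0^{a_0} ⋯ λ_n^{a_n} = 1 for every (λ_0,…,λ_n) ∈ G) if and only if a_0 = a_1 = ⋯ = a_n. Consequently, the G-invariant monomials with all exponents at most n−1 are exactly the n monomials (x_0 x_1 ⋯ x_n)^a for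 0 ≤ a ≤ n−1. -/
/-! If the exponents `a i < m` are not all equal, say `a i ≠ a j`, test the monomial against the
symmetry with a primitive `m`-th root of unity `ζ` in slot `i`, `ζ⁻¹` in slot `j` and `1`
elsewhere: it scales the monomial by `ζ ^ a i * ζ⁻¹ ^ a j ≠ 1`. Conversely, a symmetry scales
`(∏ i, x i) ^ c` by `(∏ i, lam i) ^ c = 1`. -/

section

variable {ι : Type*} [Fintype ι]

/-- `a` is the exponent vector of a monomial fixed by every diagonal symmetry of determinant 1
of the Fermat polynomial of degree `m`. -/
def IsSLInvariant (M : Type*) [CommMonoid M] (m : ℕ) (a : ι → ℕ) : Prop :=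
  ∀ lam : ι → M, (∀ i, lam i ^ m = 1) → ∏ i, lam i = 1 → ∏ i, lam i ^ a i = 1

variable {M : Type*}

theorem isSLInvariant_const [CommMonoid M] (m c : ℕ) :
    IsSLInvariant M m (fun _ : ι => c) := fun lam _ hprod => by
  rw [Finset.prod_pow, hprod, one_pow]

theorem prod_mulSingle_pow [DecidableEq ι] [CommMonoid M] (i : ι) (x : M) (a : ι → ℕ) :
    ∏ k, Pi.mulSingle i x k ^ a k = x ^ a i := by
  rw [Fintype.prod_eq_single i fun k hk => by rw [Pi.mulSingle_eq_of_ne hk, one_pow],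
    Pi.mulSingle_eq_same]

theorem IsSLInvariant.eq [CommGroupWithZero M] {ζ : M} {m : ℕ} (hζ : IsPrimitiveRoot ζ m)
    {a : ι → ℕ} (ha : ∀ i, a i < m) (hinv : IsSLInvariant M m a) (i j : ι) : a i = a j := by
  classical
  rcases eq_or_ne i j with rfl | hij
  · rfl
  set lam : ι → M := Pi.mulSingle i ζ * Pi.mulSingle j ζ⁻¹
  have hprod_pow (b : ι → ℕ) : ∏ k, lam k ^ b k = ζ ^ b i * ζ⁻¹ ^ b j := by
    simp only [lam, Pi.mul_apply, mul_pow, Finset.prod_mul_distrib, prod_mulSingle_pow]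
  have hroot (k : ι) : lam k ^ m = 1 := by
    simp only [lam, Pi.mul_apply, mul_pow, Pi.mulSingle_apply]
    split_ifs <;> simp [hζ.pow_eq_one]
  have hζ0 : ζ ≠ 0 := hζ.ne_zero (by have := ha i; omega)
  have hdet : ∏ k, lam k = 1 := by
    simpa [hζ0] using hprod_pow 1
  have hζpow : ζ ^ a i = ζ ^ a j := by
    have := hinv lam hroot hdet
    rwa [hprod_pow, inv_pow, mul_inv_eq_one₀ (pow_ne_zero _ hζ0)] at this
  exact hζ.pow_inj (ha i) (ha j) hζpow

theorem isSLInvariant_iff [Nonempty ι] [CommGroupWithZero M] {ζ : M} {m : ℕ}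
    (hζ : IsPrimitiveRoot ζ m) {a : ι → ℕ} (ha : ∀ i, a i < m) :
    IsSLInvariant M m a ↔ ∃ c, ∀ i, a i = c := by
  refine ⟨fun h => ⟨a (Classical.arbitrary ι), fun i => h.eq hζ ha i _⟩, ?_⟩
  rintro ⟨c, hc⟩
  rw [show a = fun _ => c from funext hc]
  exact isSLInvariant_const m c

end

theorem fermat_invariant_monomials_general (n : ℕ) :
    (∀ a : Fin (n+1) → ℕ, (∀ i, a i ≤ n - 1) →
      ((∀ lam : Fin (n+1) → ℂ, (∀ i, lam i ^ (n + 1) = 1) → (∏ i, lam i) = 1 →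
          (∏ i, lam i ^ a i) = 1)
        ↔ ∃ c : ℕ, ∀ i, a i = c)) ∧
    { a : Fin (n+1) → ℕ | (∀ i, a i ≤ n - 1) ∧
        (∀ lam : Fin (n+1) → ℂ, (∀ i, lam i ^ (n + 1) = 1) → (∏ i, lam i) = 1 →
          (∏ i, lam i ^ a i) = 1) }
      = { a : Fin (n+1) → ℕ | ∃ c : ℕ, c ≤ n - 1 ∧ a = fun _ => c } := by
  have hζ := Complex.isPrimitiveRoot_exp (n + 1) n.succ_ne_zero
  have key (a : Fin (n+1) → ℕ) (ha : ∀ i, a i ≤ n - 1) :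
      IsSLInvariant ℂ (n + 1) a ↔ ∃ c, ∀ i, a i = c :=
    isSLInvariant_iff hζ fun i => by have := ha i; omega
  refine ⟨key, ?_⟩
  ext a
  constructor
  · rintro ⟨ha, hinv⟩
    obtain ⟨c, hc⟩ := (key a ha).1 hinv
    exact ⟨c, hc 0 ▸ ha 0, funext hc⟩
  · rintro ⟨c, hc, rfl⟩
    exact ⟨fun _ => hc, isSLInvariant_const _ c⟩

/-- for the Fermat polynomial `x_0^(n+1) + ⋯ + x_n^(n+1)`, a monomial
`x_0^(a_0) ⋯ x_n^(a_n)` with all `a_i ≤ n-1` is invariant under the group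
`G = {λ ∈ ℂ^(n+1) : λ_i^(n+1) = 1, λ_0 ⋯ λ_n = 1}` if and only if all exponents are
equal; consequently, the `G`-invariant monomials with exponents at most `n-1` are
exactly the `(x_0 ⋯ x_n)^a` for `0 ≤ a ≤ n-1`. -/
theorem fermat_invariant_monomials (n : ℕ) (hn : 2 ≤ n) :
    (∀ a : Fin (n+1) → ℕ, (∀ i, a i ≤ n - 1) →
      ((∀ lam : Fin (n+1) → ℂ, (∀ i, lam i ^ (n + 1) = 1) → (∏ i, lam i) = 1 →
          (∏ i, lam i ^ a i) = 1)
        ↔ ∃ c : ℕ, ∀ i, a i = c)) ∧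
    { a : Fin (n+1) → ℕ | (∀ i, a i ≤ n - 1) ∧
        (∀ lam : Fin (n+1) → ℂ, (∀ i, lam i ^ (n + 1) = 1) → (∏ i, lam i) = 1 →
          (∏ i, lam i ^ a i) = 1) }
      = { a : Fin (n+1) → ℕ | ∃ c : ℕ, c ≤ n - 1 ∧ a = fun _ => c } :=
  fermat_invariant_monomials_general n
end

section
/- Let F_q be a finite field of characteristic p ∉ {2, 5, 7} and let ψ ∈ F_q with ψ^4 ≠ 1. Then each of the five quartic pencil members X_{◇,ψ} for ◇ ∈ {F_4, F_2L_2, F_1L_3, L_2L_2, L_4} is a smooth hypersurface in ℙ^3: for each of the five defining quartic polynomials F, the only common zero in an algebraic closure of F_q of the four partial derivatives ∂F/∂x_0, ∂F/∂x_1, ∂F/∂x_2, ∂F/∂x_3 is the origin (0,0,0,0). -/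
open MvPolynomial Polynomial
open scoped BigOperators

noncomputable section

/-- The five quartic pencils `F_4, F_2L_2, F_1L_3, L_2L_2, L_4` of K3 surfaces in
`ℙ^3`, with parameter `ψ`. -/
def quarticFam (F : Type*) [CommRing F] (ψ : F) : Fin 5 → MvPolynomial (Fin 4) F :=
  fun d =>
    ![ (X 0 : MvPolynomial (Fin 4) F) ^ 4 + X 1 ^ 4 + X 2 ^ 4 + X 3 ^ 4,
       (X 0 : MvPolynomial (Fin 4) F) ^ 4 + X 1 ^ 4 + X 2 ^ 3 * X 3 + X 3 ^ 3 * X 2,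
       (X 0 : MvPolynomial (Fin 4) F) ^ 4 + X 1 ^ 3 * X 2 + X 2 ^ 3 * X 3 + X 3 ^ 3 * X 1,
       (X 0 : MvPolynomial (Fin 4) F) ^ 3 * X 1 + X 1 ^ 3 * X 0 + X 2 ^ 3 * X 3 + X 3 ^ 3 * X 2,
       (X 0 : MvPolynomial (Fin 4) F) ^ 3 * X 1 + X 1 ^ 3 * X 2 + X 2 ^ 3 * X 3 + X 3 ^ 3 * X 0 ] d
    - MvPolynomial.C (4 * ψ) * (X 0 * X 1 * X 2 * X 3)

/-!
Each of the five quartics is `∑ᵢ xᵢ³ x_{σ(i)} - 4ψ ∏ xᵢ` for a permutation `σ` of the variables.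
At a common zero of the partials, `xⱼ ∂ⱼ` turns the equations into `vᵢ = -3 v_{σ(i)}` for
`vᵢ = xᵢ³ x_{σ(i)} - ψ ∏ x`. Going once around the cycle of `i`, of length `l ≤ 4`, gives
`((-3)ˡ - 1) vᵢ = 0`, and `(-3)ˡ - 1 ∈ {-4, 8, -28, 80}`, so every `vᵢ` vanishes when
`p ∉ {2, 5, 7}`. Multiplying the relations `xᵢ³ x_{σ(i)} = ψ ∏ x` gives `(∏ x)⁴ = ψ⁴ (∏ x)⁴`,
hence `∏ x = 0` and every monomial `xᵢ³ x_{σ(i)}` vanishes. Then two coordinates vanish, so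
`∂ⱼ` at a zero coordinate `xⱼ` reduces to `x_{σ⁻¹(j)}³ = 0`, and the zeros propagate to `x = 0`.
-/

lemma eq_zero_of_forall_eq_mul_apply_perm {ι R : Type*} [Fintype ι] [Ring R] [NoZeroDivisors R]
    (σ : Equiv.Perm ι) {c : R} (hc : ∀ k, 0 < k → k ≤ Fintype.card ι → c ^ k ≠ 1) {v : ι → R}
    (hv : ∀ i, v i = c * v (σ i)) : v = 0 := by
  funext i
  have hiter : ∀ k, v i = c ^ k * v (σ^[k] i) := by
    intro k
    induction k with
    | zero => simp
    | succ k ih => rw [ih, hv, Function.iterate_succ_apply', pow_succ, mul_assoc]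
  have hperiod : 0 < Function.minimalPeriod σ i :=
    Function.minimalPeriod_pos_of_mem_periodicPts (σ.injective.mem_periodicPts i)
  have hfix := hiter (Function.minimalPeriod σ i)
  rw [Function.iterate_minimalPeriod] at hfix
  have hcycle : (1 - c ^ Function.minimalPeriod σ i) * v i = 0 := by
    rw [sub_mul, one_mul, ← hfix, sub_self]
  exact (mul_eq_zero.mp hcycle).resolve_left
    (sub_ne_zero.mpr (hc _ hperiod Function.minimalPeriod_le_card).symm)

lemma prod_pow_card_sub_one_mul_apply {ι M : Type*} [Fintype ι] [Nonempty ι] [CommMonoid M]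
    (σ : Equiv.Perm ι) (x : ι → M) :
    ∏ i, x i ^ (Fintype.card ι - 1) * x (σ i) = (∏ i, x i) ^ Fintype.card ι := by
  rw [Finset.prod_mul_distrib, Finset.prod_pow, Equiv.prod_comp, ← pow_succ,
    Nat.sub_add_cancel Fintype.card_pos]

lemma exists_ne_of_forall_eq_zero_or_apply_eq_zero {ι M : Type*} [Fintype ι] [Zero M]
    (σ : Equiv.Perm ι) (hι : 3 ≤ Fintype.card ι) {x : ι → M} (hx : ∀ i, x i = 0 ∨ x (σ i) = 0) :
    ∃ j k, j ≠ k ∧ x j = 0 ∧ x k = 0 := by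
  classical
  have : Nonempty ι := Fintype.card_pos_iff.mp (by omega)
  obtain ⟨j, hj⟩ : ∃ j, x j = 0 := (hx (Classical.arbitrary ι)).elim (⟨_, ·⟩) (⟨_, ·⟩)
  obtain ⟨i, -, hi⟩ : ∃ i ∈ Finset.univ, i ∉ ({j, σ.symm j} : Finset ι) :=
    Finset.exists_mem_notMem_of_card_lt_card
      ((Finset.card_le_two).trans_lt (by rw [Finset.card_univ]; omega))
  rw [Finset.mem_insert, Finset.mem_singleton, not_or, Equiv.eq_symm_apply] at hi
  rcases hx i with h | h
  · exact ⟨i, j, hi.1, h, hj⟩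
  · exact ⟨σ i, j, hi.2, h, hj⟩

section LoopPencil

variable {ι K : Type*} [CommRing K]

/-- Each cycle of `σ` of length `l` contributes a loop potential `L_l` of the paper
(a fixed point a Fermat term `F_1`). -/
def loopPencil [Fintype ι] (σ : Equiv.Perm ι) (ψ : K) : MvPolynomial ι K :=
  ∑ i, X i ^ (Fintype.card ι - 1) * X (σ i) - MvPolynomial.C (Fintype.card ι * ψ) * ∏ i, X i

variable [DecidableEq ι]

lemma pderiv_prod_X_of_notMem {s : Finset ι} {j : ι} (hj : j ∉ s) :
    pderiv j (∏ i ∈ s, X i : MvPolynomial ι K) = 0 := by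
  induction s using Finset.induction_on with
  | empty => simp
  | insert a s ha ih =>
    rw [Finset.mem_insert, not_or] at hj
    rw [Finset.prod_insert ha, pderiv_mul, pderiv_X_of_ne (Ne.symm hj.1), ih hj.2]
    simp

variable [Fintype ι]

lemma pderiv_prod_X_s16 (j : ι) :
    pderiv j (∏ i, X i : MvPolynomial ι K) = ∏ i ∈ Finset.univ.erase j, X i := by
  rw [← Finset.mul_prod_erase Finset.univ X (Finset.mem_univ j), pderiv_mul, pderiv_X_self,
    pderiv_prod_X_of_notMem (Finset.notMem_erase j _)]
  simp

lemma eval_pderiv_loopPencil (σ : Equiv.Perm ι) (ψ : K) (x : ι → K) (j : ι) :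
    eval x (pderiv j (loopPencil σ ψ)) =
      (Fintype.card ι - 1 : ℕ) * x j ^ (Fintype.card ι - 2) * x (σ j)
        + x (σ.symm j) ^ (Fintype.card ι - 1)
        - Fintype.card ι * ψ * ∏ k ∈ Finset.univ.erase j, x k := by
  simp only [loopPencil, map_natCast, map_sub, map_sum, Derivation.leibniz,
    pderiv_X, Pi.single_apply, ← Equiv.eq_symm_apply, smul_eq_mul, mul_ite, mul_one, mul_zero,
    Derivation.leibniz_pow, Nat.sub_sub, Nat.reduceAdd, smul_ite, nsmul_eq_mul,
    Finset.sum_add_distrib, Finset.sum_ite_eq', Finset.mem_univ, ↓reduceIte, pderiv_prod_X_s16,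
    MvPolynomial.derivation_C, Derivation.map_natCast, add_zero, map_add, map_pow,
    MvPolynomial.eval_X, map_mul, MvPolynomial.eval_C, map_prod]
  ring

lemma eval_X_mul_pderiv_loopPencil (σ : Equiv.Perm ι) (ψ : K) (x : ι → K) (j : ι) :
    eval x (X j * pderiv j (loopPencil σ ψ)) =
      (Fintype.card ι - 1 : ℕ) * (x j ^ (Fintype.card ι - 1) * x (σ j))
        + x (σ.symm j) ^ (Fintype.card ι - 1) * x j - Fintype.card ι * ψ * ∏ k, x k := by
  rw [map_mul, MvPolynomial.eval_X, eval_pderiv_loopPencil,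
    ← Finset.mul_prod_erase Finset.univ x (Finset.mem_univ j)]
  rcases Nat.lt_or_ge (Fintype.card ι) 2 with h | h
  · rw [show Fintype.card ι - 1 = 0 by omega]
    ring
  · rw [show Fintype.card ι - 1 = Fintype.card ι - 2 + 1 by omega]
    ring

theorem eq_zero_of_forall_eval_pderiv_loopPencil_eq_zero [IsDomain K] (σ : Equiv.Perm ι) {ψ : K}
    (hι : 3 ≤ Fintype.card ι)
    (hc : ∀ k, 0 < k → k ≤ Fintype.card ι → (1 - Fintype.card ι : K) ^ k ≠ 1)
    (hψ : ψ ^ Fintype.card ι ≠ 1) {x : ι → K}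
    (hx : ∀ j, eval x (pderiv j (loopPencil σ ψ)) = 0) : x = 0 := by
  have : Nonempty ι := Fintype.card_pos_iff.mp (by omega)
  have hterm : ∀ i, x i ^ (Fintype.card ι - 1) * x (σ i) = ψ * ∏ k, x k := by
    have hv := eq_zero_of_forall_eq_mul_apply_perm σ hc
      (v := fun i => x i ^ (Fintype.card ι - 1) * x (σ i) - ψ * ∏ k, x k) fun i => by
        have := eval_X_mul_pderiv_loopPencil σ ψ x (σ i)
        rw [map_mul, hx, mul_zero, σ.symm_apply_apply, Nat.cast_sub (by omega)] at this
        linear_combination -this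
    exact fun i => sub_eq_zero.mp (congrFun hv i)
  have hprod : ∏ k, x k = 0 := by
    have h := prod_pow_card_sub_one_mul_apply σ x
    simp only [hterm, Finset.prod_const, Finset.card_univ, mul_pow] at h
    have : (ψ ^ Fintype.card ι - 1) * (∏ k, x k) ^ Fintype.card ι = 0 := by linear_combination h
    exact eq_zero_of_pow_eq_zero ((mul_eq_zero.mp this).resolve_left (sub_ne_zero.mpr hψ))
  have hzero : ∀ i, x i = 0 ∨ x (σ i) = 0 := fun i => by
    have := hterm i
    rw [hprod, mul_zero] at this
    exact (mul_eq_zero.mp this).imp_left eq_zero_of_pow_eq_zero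
  obtain ⟨j₁, j₂, hne, hj₁, hj₂⟩ := exists_ne_of_forall_eq_zero_or_apply_eq_zero σ hι hzero
  have hback : ∀ j, x j = 0 → x (σ.symm j) = 0 := by
    intro j hj
    obtain ⟨k, hkj, hk⟩ : ∃ k, k ≠ j ∧ x k = 0 :=
      if h : j₁ = j then ⟨j₂, h ▸ hne.symm, hj₂⟩ else ⟨j₁, h, hj₁⟩
    have := hx j
    rw [eval_pderiv_loopPencil, hj, zero_pow (by omega),
      Finset.prod_eq_zero (Finset.mem_erase.mpr ⟨hkj, Finset.mem_univ k⟩) hk] at this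
    exact eq_zero_of_pow_eq_zero (by linear_combination this)
  funext i
  exact (hzero i).elim id fun h => by simpa using hback _ h

end LoopPencil

lemma map_quarticFam {F K : Type*} [CommRing F] [CommRing K] (f : F →+* K) (ψ : F) (d : Fin 5) :
    (quarticFam F ψ d).map f = quarticFam K (f ψ) d := by
  fin_cases d <;> simp [quarticFam, map_ofNat]

lemma exists_loopPencil_eq_quarticFam {K : Type*} [CommRing K] (ψ : K) (d : Fin 5) :
    ∃ σ : Equiv.Perm (Fin 4), loopPencil σ ψ = quarticFam K ψ d := by
  fin_cases d <;> [use 1; use Equiv.swap 2 3; use Equiv.swap 1 2 * Equiv.swap 2 3;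
    use Equiv.swap 0 1 * Equiv.swap 2 3; use Equiv.swap 0 1 * Equiv.swap 1 2 * Equiv.swap 2 3]
  all_goals
    simp only [loopPencil, quarticFam, Fintype.card_fin, Fin.sum_univ_four, Fin.prod_univ_four,
      Equiv.Perm.coe_one, Equiv.Perm.coe_mul, Function.comp_apply, id_eq, Equiv.swap_apply_left,
      Equiv.swap_apply_right, Equiv.swap_apply_of_ne_of_ne, ne_eq, Fin.reduceEq, not_false_eq_true,
      Nat.cast_ofNat, Fin.isValue, Fin.reduceFinMk, Matrix.cons_val, ← pow_succ]

lemma natCast_ne_zero_of_ringChar_ne {F K : Type*} [Field F] [CommRing K] [Nontrivial K]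
    [Algebra F K] {p : ℕ} (hp : p.Prime) (h : ringChar F ≠ p) : (p : K) ≠ 0 := by
  rw [← map_natCast (algebraMap F K)]
  exact (_root_.map_ne_zero _).mpr (CharP.cast_ne_zero_of_ne_of_prime F hp h)

lemma neg_three_pow_ne_one {K : Type*} [CommRing K] [IsDomain K] (h2 : (2 : K) ≠ 0)
    (h5 : (5 : K) ≠ 0) (h7 : (7 : K) ≠ 0) {k : ℕ} (hk : 0 < k) (hk4 : k ≤ 4) :
    (-3 : K) ^ k ≠ 1 := by
  intro h
  interval_cases k
  · exact pow_ne_zero 2 h2 (by linear_combination -h)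
  · exact pow_ne_zero 3 h2 (by linear_combination h)
  · exact mul_ne_zero (pow_ne_zero 2 h2) h7 (by linear_combination -h)
  · exact mul_ne_zero (pow_ne_zero 4 h2) h5 (by linear_combination h)

theorem quartic_pencils_smooth_general (F : Type) [Field F]
    (hp : ringChar F ≠ 2 ∧ ringChar F ≠ 5 ∧ ringChar F ≠ 7)
    (ψ : F) (hψ : ψ ^ 4 ≠ 1) :
    ∀ d : Fin 5, ∀ x : Fin 4 → AlgebraicClosure F,
      (∀ i, MvPolynomial.eval x
        (MvPolynomial.pderiv i
          ((quarticFam F ψ d).map (algebraMap F (AlgebraicClosure F)))) = 0) →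
      x = 0 := by
  intro d x hx
  obtain ⟨hp2, hp5, hp7⟩ := hp
  obtain ⟨σ, hσ⟩ := exists_loopPencil_eq_quarticFam (algebraMap F (AlgebraicClosure F) ψ) d
  rw [map_quarticFam, ← hσ] at hx
  refine eq_zero_of_forall_eval_pderiv_loopPencil_eq_zero σ (by simp) (fun k hk hk4 => ?_) ?_ hx
  · rw [Fintype.card_fin] at hk4 ⊢
    convert neg_three_pow_ne_one (K := AlgebraicClosure F)
      (natCast_ne_zero_of_ringChar_ne Nat.prime_two hp2)
      (natCast_ne_zero_of_ringChar_ne (by norm_num) hp5)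
      (natCast_ne_zero_of_ringChar_ne (by norm_num) hp7) hk hk4 using 2
    norm_num
  · rw [Fintype.card_fin, ← map_pow, ← map_one (algebraMap F (AlgebraicClosure F))]
    exact (algebraMap F _).injective.ne hψ

/-- for `p ∉ {2,5,7}` and `ψ^4 ≠ 1`, each of the five quartic pencil
members is smooth: the only common zero in an algebraic closure of the four partial
derivatives of the defining quartic is the origin. -/
theorem quartic_pencils_smooth (F : Type) [Field F] [Fintype F]
    (hp : ringChar F ≠ 2 ∧ ringChar F ≠ 5 ∧ ringChar F ≠ 7)
    (ψ : F) (hψ : ψ ^ 4 ≠ 1) :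
    ∀ d : Fin 5, ∀ x : Fin 4 → AlgebraicClosure F,
      (∀ i, MvPolynomial.eval x
        (MvPolynomial.pderiv i
          ((quarticFam F ψ d).map (algebraMap F (AlgebraicClosure F)))) = 0) →
      x = 0 :=
  quartic_pencils_smooth_general F hp ψ hψ

end
end
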